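/- arXiv:2104.09009 — 8 statements merged into one kernel-verified Lean document; each statement's English description precedes it below -/
import Mathlib

section
/- The cross-product inequality implies the Kahn–Saks inequality: suppose that for every finite poset Q and distinct elements x, y, z of Q, writing F_Q(k,ℓ) for the number of linear extensions L of Q with L(y) - L(x) = k and L(z) - L(y) = ℓ, we have F_Q(k,ℓ)·F_Q(k+1,ℓ+1) ≤ F_Q(k,ℓ+1)·F_Q(k+1,ℓ) for all k, ℓ ≥ 1. Then for every finite poset P and distinct x, z in P, writing F_P(m) for the number of linear extensions L of P with L(z) - L(x) = m, we have F_P(m)² ≥ F_P(m-1)·F_P(m+1) for all m > 1. -/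
/-- Number of linear extensions `L` with `L(y) - L(x) = k` and `L(z) - L(y) = l`. -/
noncomputable def numExt2 {X : Type} [Fintype X] [PartialOrder X]
    (x y z : X) (k l : ℤ) : ℕ :=
  Nat.card {L : X ≃ Fin (Fintype.card X) //
    (∀ u v : X, u < v → L u < L v) ∧
    ((L y : ℕ) : ℤ) - ((L x : ℕ) : ℤ) = k ∧
    ((L z : ℕ) : ℤ) - ((L y : ℕ) : ℤ) = l}

/-- Number of linear extensions `L` with `L(z) - L(x) = m`. -/
noncomputable def numExt1 {X : Type} [Fintype X] [PartialOrder X]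
    (x z : X) (m : ℤ) : ℕ :=
  Nat.card {L : X ≃ Fin (Fintype.card X) //
    (∀ u v : X, u < v → L u < L v) ∧
    ((L z : ℕ) : ℤ) - ((L x : ℕ) : ℤ) = m}

/-!
Adjoin to `P` a point `y` incomparable to everything. A linear extension `L'` of `P ⊕ {y}` is a
linear extension `L` of `P` with `y` inserted at some position `p`, and for `k, l ≥ 1` the conditions
`L'(y) - L'(x) = k`, `L'(z) - L'(y) = l` say exactly that `L(z) - L(x) = k + l - 1` and
`p = L(x) + k`. Hence `F_{P ⊕ {y}}(k, l) = F_P(k + l - 1)`, and the cross-product inequality at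
`(m - 1, 1)` is the Kahn–Saks inequality at `m`.
-/

open Sum

lemma Fin.val_succAbove {n : ℕ} (p : Fin (n + 1)) (i : Fin n) :
    (p.succAbove i : ℕ) = if (i : ℕ) < p then (i : ℕ) else i + 1 := by
  simp only [Fin.succAbove, Fin.lt_def, Fin.val_castSucc]
  split_ifs <;> simp

lemma Fin.succAbove_gaps_iff {n : ℕ} (p : Fin (n + 1)) (i j : Fin n) {k l : ℤ}
    (hk : 1 ≤ k) (hl : 1 ≤ l) :
    ((p : ℤ) - (p.succAbove i : ℕ) = k ∧ ((p.succAbove j : ℕ) : ℤ) - p = l) ↔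
      ((j : ℤ) - i = k + l - 1 ∧ (p : ℤ) = i + k) := by
  rw [Fin.val_succAbove, Fin.val_succAbove]
  split_ifs <;> omega

section Insertion
variable {X : Type*} {n : ℕ}

/-- A numbering of `X ⊕ Unit` is a position for the new point together with a numbering of `X`,
which is read off by skipping that position. -/
def insertionEquiv : Fin (n + 1) × (X ≃ Fin n) ≃ (X ⊕ Unit ≃ Fin (n + 1)) :=
  (Equiv.sigmaEquivProd _ _).symm.trans <|
    (Equiv.sigmaCongrRight fun p => (Equiv.equivCongr (.refl X) (finSuccAboveEquiv p)).trans
      (Equiv.optionSubtype p).symm).trans <|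
    (Equiv.sigmaFiberEquiv _).trans (Equiv.equivCongr (Equiv.optionEquivSumPUnit X) (.refl _))

@[simp] lemma insertionEquiv_apply_inl (p : Fin (n + 1)) (L : X ≃ Fin n) (u : X) :
    insertionEquiv (p, L) (inl u) = p.succAbove (L u) := rfl

@[simp] lemma insertionEquiv_apply_inr (p : Fin (n + 1)) (L : X ≃ Fin n) :
    insertionEquiv (p, L) (inr ()) = p := rfl

lemma strictMono_insertionEquiv_iff [Preorder X] (p : Fin (n + 1)) (L : X ≃ Fin n) :
    StrictMono (insertionEquiv (p, L)) ↔ StrictMono L := by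
  refine ⟨fun h u v huv => ?_, fun h => ?_⟩
  · simpa using h (inl_lt_inl_iff.2 huv)
  · rintro (u | ⟨⟩) (v | ⟨⟩) huv
    · simpa using h (inl_lt_inl_iff.1 huv)
    · exact absurd huv not_inl_lt_inr
    · exact absurd huv not_inr_lt_inl
    · exact absurd (inr_lt_inr_iff.1 huv) (lt_irrefl _)

variable [Preorder X] (x z : X) {k l : ℤ}

def positionForcedEquiv (hk : 1 ≤ k) (hl : 1 ≤ l) :
    {q : Fin (n + 1) × (X ≃ Fin n) //
      StrictMono q.2 ∧ ((q.2 z : ℕ) : ℤ) - (q.2 x : ℕ) = k + l - 1 ∧ (q.1 : ℤ) = (q.2 x : ℕ) + k} ≃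
    {L : X ≃ Fin n // StrictMono L ∧ ((L z : ℕ) : ℤ) - (L x : ℕ) = k + l - 1} where
  toFun q := ⟨q.1.2, q.2.1, q.2.2.1⟩
  invFun L := ⟨(⟨(L.1 x : ℕ) + k.toNat, by have := (L.1 z).isLt; omega⟩, L.1), L.2.1, L.2.2,
    by push_cast; omega⟩
  left_inv := by
    rintro ⟨⟨p, L⟩, -, -, hp⟩
    refine Subtype.ext (Prod.ext (Fin.ext ?_) rfl)
    dsimp only at hp ⊢
    omega
  right_inv _ := rfl

theorem card_linExt_sumUnit (hk : 1 ≤ k) (hl : 1 ≤ l) :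
    Nat.card {L : X ⊕ Unit ≃ Fin (n + 1) // StrictMono L ∧
      ((L (inr ()) : ℕ) : ℤ) - (L (inl x) : ℕ) = k ∧ ((L (inl z) : ℕ) : ℤ) - (L (inr ()) : ℕ) = l} =
    Nat.card {L : X ≃ Fin n // StrictMono L ∧ ((L z : ℕ) : ℤ) - (L x : ℕ) = k + l - 1} := by
  refine Nat.card_congr <| (insertionEquiv.subtypeEquiv fun q => ?_).symm.trans
    (positionForcedEquiv x z hk hl)
  obtain ⟨p, L⟩ := q
  simp only [strictMono_insertionEquiv_iff, insertionEquiv_apply_inl, insertionEquiv_apply_inr,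
    Fin.succAbove_gaps_iff p _ _ hk hl]

end Insertion

theorem numExt2_inl_inr_inl {P : Type} [Fintype P] [PartialOrder P] (x z : P) {k l : ℤ}
    (hk : 1 ≤ k) (hl : 1 ≤ l) :
    numExt2 (inl x) (inr ()) (inl z) k l = numExt1 x z (k + l - 1) := by
  unfold numExt2 numExt1
  have hcard : Fintype.card (P ⊕ Unit) = Fintype.card P + 1 := by simp
  generalize Fintype.card (P ⊕ Unit) = N at hcard ⊢
  subst hcard
  exact card_linExt_sumUnit x z hk hl

/-- The cross–product inequality (assumed for all finite posets) implies
the Kahn–Saks inequality. -/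
theorem cross_product_implies_kahn_saks
    (H : ∀ (Q : Type) [Fintype Q] [PartialOrder Q],
      ∀ x y z : Q, x ≠ y → x ≠ z → y ≠ z →
      ∀ k l : ℤ, 1 ≤ k → 1 ≤ l →
        numExt2 x y z k l * numExt2 x y z (k + 1) (l + 1) ≤
          numExt2 x y z k (l + 1) * numExt2 x y z (k + 1) l) :
    ∀ (P : Type) [Fintype P] [PartialOrder P],
      ∀ x z : P, x ≠ z → ∀ m : ℤ, 1 < m →
        numExt1 x z (m - 1) * numExt1 x z (m + 1) ≤ numExt1 x z m * numExt1 x z m := by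
  intro P _ _ x z hxz m hm
  have key := H (P ⊕ Unit) (inl x) (inr ()) (inl z) inl_ne_inr (by simpa) inr_ne_inl
    (m - 1) 1 (by omega) le_rfl
  simp (disch := omega) only [numExt2_inl_inr_inl] at key
  convert key using 3 <;> ring
end

section
/- The cross-product relation is transitive on nonzero admissible vectors: if v, w, u are nonzero admissible vectors in ℕ^ℕ with v ≼ w and w ≼ u, then v ≼ u, where v ≼ w means v(i)·w(j) ≥ v(j)·w(i) for all i ≤ j. -/
/-- A vector `v : ℕ → ℕ` is admissible if it has finite (bounded) support and its
support is an interval. -/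
def Admissible (v : ℕ → ℕ) : Prop :=
  {i | v i ≠ 0}.Finite ∧
  ∀ i j k : ℕ, i ≤ j → j ≤ k → v i ≠ 0 → v k ≠ 0 → v j ≠ 0

/-- The cross–product relation `v ≼ w`: `v(i)·w(j) ≥ v(j)·w(i)` for all `i ≤ j`. -/
def CPRel (v w : ℕ → ℕ) : Prop := ∀ i j : ℕ, i ≤ j → v j * w i ≤ v i * w j

/-!
Fix `i ≤ j` with `u i ≠ 0` and `v j ≠ 0` (otherwise there is nothing to prove). If `w i = 0`,
then `w ≼ u` at `(i, k)` forces `w k = 0` for all `k ≥ i`; if `w j = 0`, then `v ≼ w` at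
`(k, j)` forces `w k = 0` for all `k ≤ j`. Since `i ≤ j`, either vanishing implies the other,
and together they kill `w`. So `w i` and `w j` are positive, and multiplying the two
cross-product inequalities at `(i, j)` and cancelling `w i * w j` gives `v ≼ u`.
-/

theorem Nat.cross_mul_le_trans {a b c d e f : ℕ} (hc : 0 < c) (hd : 0 < d)
    (h₁ : b * c ≤ a * d) (h₂ : d * e ≤ c * f) : b * e ≤ a * f := by
  refine Nat.le_of_mul_le_mul_right ?_ (Nat.mul_pos hc hd)
  calc b * e * (c * d) = b * c * (d * e) := by ring
    _ ≤ a * d * (c * f) := Nat.mul_le_mul h₁ h₂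
    _ = a * f * (c * d) := by ring

namespace CPRel

variable {v w u : ℕ → ℕ}

theorem apply_eq_zero_of_ge (hwu : CPRel w u) {i k : ℕ} (hui : u i ≠ 0) (hwi : w i = 0)
    (hik : i ≤ k) : w k = 0 := by
  have := hwu i k hik
  rw [hwi, Nat.zero_mul, Nat.le_zero, Nat.mul_eq_zero] at this
  exact this.resolve_right hui

theorem apply_eq_zero_of_le (hvw : CPRel v w) {j k : ℕ} (hvj : v j ≠ 0) (hwj : w j = 0)
    (hkj : k ≤ j) : w k = 0 := by
  have := hvw k j hkj
  rw [hwj, Nat.mul_zero, Nat.le_zero, Nat.mul_eq_zero] at this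
  exact this.resolve_left hvj

theorem eq_zero_of_apply_eq_zero (hvw : CPRel v w) (hwu : CPRel w u) {i j : ℕ} (hij : i ≤ j)
    (hui : u i ≠ 0) (hvj : v j ≠ 0) (hwi : w i = 0) : w = 0 := by
  have hwj : w j = 0 := hwu.apply_eq_zero_of_ge hui hwi hij
  funext k
  rcases le_total i k with hik | hki
  · exact hwu.apply_eq_zero_of_ge hui hwi hik
  · exact hvw.apply_eq_zero_of_le hvj hwj (hki.trans hij)

end CPRel

theorem cprel_trans_general (v w u : ℕ → ℕ)
    (hw0 : w ≠ 0)
    (hvw : CPRel v w) (hwu : CPRel w u) : CPRel v u := by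
  intro i j hij
  by_cases hui : u i = 0
  · simp [hui]
  by_cases hvj : v j = 0
  · simp [hvj]
  have hwi : w i ≠ 0 := fun hwi => hw0 (hvw.eq_zero_of_apply_eq_zero hwu hij hui hvj hwi)
  have hwj : w j ≠ 0 := fun hwj => hwi (hvw.apply_eq_zero_of_le hvj hwj hij)
  exact Nat.cross_mul_le_trans (Nat.pos_of_ne_zero hwi) (Nat.pos_of_ne_zero hwj)
    (hvw i j hij) (hwu i j hij)

/-- The cross-product relation is transitive on nonzero admissible vectors. -/
theorem cprel_trans (v w u : ℕ → ℕ)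
    (hv : Admissible v) (hw : Admissible w) (hu : Admissible u)
    (hv0 : v ≠ 0) (hw0 : w ≠ 0) (hu0 : u ≠ 0)
    (hvw : CPRel v w) (hwu : CPRel w u) : CPRel v u :=
  cprel_trans_general v w u hw0 hvw hwu
end

section
/- Let M be a matrix with nonnegative entries all of whose 2×2 minors are nonnegative (rows/columns indexed by positive integers, with only finitely many nonzero entries in play so that M·v is well-defined). Then for admissible vectors v, w with v ≼ w, one has M·v ≼ M·w, where ≼ is the cross-product relation: a ≼ b iff a(i)·b(j) ≥ a(j)·b(i) for all i ≤ j. -/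
theorem Finset.sum_sum_le_of_add_swap_le {ι R : Type*} [LinearOrder ι] [CommSemiring R]
    [LinearOrder R] [IsStrictOrderedRing R] (S : Finset ι) (F G : ι → ι → R)
    (h : ∀ t s, t ≤ s → F t s + F s t ≤ G t s + G s t) :
    ∑ t ∈ S, ∑ s ∈ S, F t s ≤ ∑ t ∈ S, ∑ s ∈ S, G t s := by
  have h_all : ∀ t s, F t s + F s t ≤ G t s + G s t := fun t s =>
    (le_total t s).elim (h t s) fun hst => by
      simpa only [add_comm] using h s t hst
  have h_symm : ∀ H : ι → ι → R,
      ∑ t ∈ S, ∑ s ∈ S, (H t s + H s t) = 2 * ∑ t ∈ S, ∑ s ∈ S, H t s := fun H => by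
    simp only [Finset.sum_add_distrib, two_mul]
    rw [Finset.sum_comm (f := fun t s => H s t)]
  refine le_of_mul_le_mul_left ?_ (zero_lt_two : (0 : R) < 2)
  rw [← h_symm, ← h_symm]
  exact Finset.sum_le_sum fun t _ => Finset.sum_le_sum fun s _ => h_all t s

/-- Two-row Cauchy–Binet: nonnegative minors of `(a, b)` and of `(v, w)` give a nonnegative minor
of the products. -/
theorem Finset.sum_mul_sum_le_of_minors_nonneg {ι R : Type*} [LinearOrder ι] [CommSemiring R]
    [LinearOrder R] [IsStrictOrderedRing R] [ExistsAddOfLE R] (S : Finset ι) (a b v w : ι → R)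
    (hab : ∀ t s, t ≤ s → b t * a s ≤ a t * b s) (hvw : ∀ t s, t ≤ s → v s * w t ≤ v t * w s) :
    (∑ t ∈ S, b t * v t) * (∑ t ∈ S, a t * w t) ≤
      (∑ t ∈ S, a t * v t) * (∑ t ∈ S, b t * w t) := by
  simp only [Finset.sum_mul_sum]
  refine Finset.sum_sum_le_of_add_swap_le S _ _ fun t s hts => ?_
  calc b t * v t * (a s * w s) + b s * v s * (a t * w t)
      = (b t * a s) * (v t * w s) + (a t * b s) * (v s * w t) := by ring
    _ ≤ (b t * a s) * (v s * w t) + (a t * b s) * (v t * w s) :=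
        mul_add_mul_le_mul_add_mul (hab t s hts) (hvw t s hts)
    _ = a t * v t * (b s * w s) + a s * v s * (b t * w t) := by ring

theorem finsum_mul_eq_sum_of_support_subset {ι R : Type*} [CommSemiring R] (m v : ι → R)
    {S : Finset ι} (hS : Function.support v ⊆ S) : ∑ᶠ t, m t * v t = ∑ t ∈ S, m t * v t :=
  finsum_eq_sum_of_support_subset _ ((Function.support_mul_subset_right m v).trans hS)

/-- If all `2×2` minors of the (entrywise nonnegative) matrix `M` are nonnegative,
then `M` preserves the cross–product relation on admissible vectors. -/
theorem matrix_preserves_cprel (M : ℕ → ℕ → ℕ)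
    (hM : ∀ i j k l : ℕ, i ≤ j → k ≤ l → M j k * M i l ≤ M i k * M j l)
    (v w : ℕ → ℕ) (hv : Admissible v) (hw : Admissible w) (hvw : CPRel v w) :
    CPRel (fun i => ∑ᶠ t, M i t * v t) (fun i => ∑ᶠ t, M i t * w t) := by
  classical
  intro i j hij
  set S := hv.1.toFinset ∪ hw.1.toFinset
  have hvS : Function.support v ⊆ S := fun t ht => by simp_all [S]
  have hwS : Function.support w ⊆ S := fun t ht => by simp_all [S]
  simp only [finsum_mul_eq_sum_of_support_subset _ _ hvS,
    finsum_mul_eq_sum_of_support_subset _ _ hwS]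
  exact Finset.sum_mul_sum_le_of_minors_nonneg S (M i) (M j) v w (hM i j · · hij) hvw
end

section
/- Let P be a finite poset of width two on n elements and let x ∈ X. Define q(i) to be the number of linear extensions L of P with L(x) = i. Then the sequence q is log-concave: q(i)² ≥ q(i-1)·q(i+1) for all i ≥ 1. (Stanley inequality for width-two posets.) -/
open scoped Classical

/-! ### Sequence lemmas -/

lemma exists_maximal_old {α : Type*} [Preorder α] (s : Finset α) (h : s.Nonempty) :
    ∃ m ∈ s, ∀ x ∈ s, ¬ m < x := by
  obtain ⟨m, hm⟩ := Finset.exists_maximal h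
  exact ⟨m, hm.1, fun x hx hlt => lt_irrefl _ (lt_of_lt_of_le hlt (hm.2 hx hlt.le))⟩

def LogConc (f : ℕ → ℕ) : Prop := ∀ t : ℕ, f t * f (t + 2) ≤ f (t + 1) * f (t + 1)

def IntervalP (P : ℕ → Prop) : Prop := ∀ a b c : ℕ, a ≤ b → b ≤ c → P a → P c → P b

def IntervalSupp (f : ℕ → ℕ) : Prop := IntervalP (fun t => f t ≠ 0)

def psum (f : ℕ → ℕ) (t : ℕ) : ℕ := ∑ k ∈ Finset.range (t + 1), f k

noncomputable def trunc (P : ℕ → Prop) (f : ℕ → ℕ) : ℕ → ℕ :=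
  fun t => if P t then f t else 0

lemma psum_succ (f : ℕ → ℕ) (t : ℕ) : psum f (t + 1) = psum f t + f (t + 1) := by
  simp [psum, Finset.sum_range_succ]

lemma psum_mono (f : ℕ → ℕ) {t₁ t₂ : ℕ} (h : t₁ ≤ t₂) : psum f t₁ ≤ psum f t₂ := by
  unfold psum
  exact Finset.sum_le_sum_of_subset (Finset.range_subset_range.2 (by omega))

lemma psum_eq_zero_iff (f : ℕ → ℕ) (t : ℕ) : psum f t = 0 ↔ ∀ k ≤ t, f k = 0 := by
  unfold psum
  rw [Finset.sum_eq_zero_iff]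
  constructor
  · intro h k hk; exact h k (Finset.mem_range.2 (by omega))
  · intro h k hk; exact h k (by simp at hk; omega)

lemma psum_cross {f : ℕ → ℕ} (hLC : LogConc f) (hIS : IntervalSupp f) :
    ∀ t, psum f t * f (t + 2) ≤ psum f (t + 1) * f (t + 1) := by
  intro t
  induction t with
  | zero =>
      have h0 : psum f 0 = f 0 := by simp [psum]
      have h1 : psum f 1 = f 0 + f 1 := by
        simp [psum, Finset.sum_range_succ]
      rw [h0, h1]
      calc f 0 * f 2 ≤ f 1 * f 1 := hLC 0
        _ ≤ (f 0 + f 1) * f 1 := Nat.mul_le_mul_right _ (by omega)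
  | succ t ih =>
      by_cases hz : f (t + 2) = 0
      · have hlc := hLC (t + 1)
        have hm : f (t + 1) * f (t + 3) = 0 := by
          have h' : f (t + 1) * f (t + 1 + 2) ≤ f (t + 2) * f (t + 2) := hlc
          rw [hz] at h'
          simpa using h'
        rcases Nat.mul_eq_zero.1 hm with h1 | h3
        · by_cases h3' : f (t + 3) = 0
          · have : t + 1 + 2 = t + 3 := rfl
            rw [this, h3']
            simp
          · have hps : psum f (t + 1) = 0 := by
              rw [psum_eq_zero_iff]
              intro k hk
              by_contra hfk
              exact (hIS k (t + 2) (t + 3) (by omega) (by omega) hfk h3') hz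
            have hpt : psum f t = 0 := by
              rw [psum_eq_zero_iff] at hps ⊢
              intro k hk; exact hps k (by omega)
            rw [psum_succ, hpt, h1]
            simp
        · have : t + 1 + 2 = t + 3 := rfl
          rw [this, h3]
          simp
      · have key : psum f (t + 1) * f (t + 1 + 2) * f (t + 2) ≤
            psum f (t + 1 + 1) * f (t + 1 + 1) * f (t + 2) := by
          have e1 : psum f (t + 1) * f (t + 3) * f (t + 2)
              = psum f t * f (t + 2) * f (t + 3) + f (t + 1) * f (t + 3) * f (t + 2) := by
            rw [psum_succ]; ring
          have b1 : psum f t * f (t + 2) * f (t + 3) ≤ psum f (t + 1) * f (t + 1) * f (t + 3) :=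
            Nat.mul_le_mul_right _ ih
          have hlc1 : f (t + 1) * f (t + 3) ≤ f (t + 2) * f (t + 2) := hLC (t + 1)
          have b2 : psum f (t + 1) * f (t + 1) * f (t + 3) ≤
              psum f (t + 1) * (f (t + 2) * f (t + 2)) := by
            calc psum f (t + 1) * f (t + 1) * f (t + 3)
                = psum f (t + 1) * (f (t + 1) * f (t + 3)) := by ring
              _ ≤ psum f (t + 1) * (f (t + 2) * f (t + 2)) := Nat.mul_le_mul_left _ hlc1
          have b3 : f (t + 1) * f (t + 3) * f (t + 2) ≤ f (t + 2) * f (t + 2) * f (t + 2) :=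
            Nat.mul_le_mul_right _ hlc1
          have e2 : psum f (t + 1 + 1) * f (t + 1 + 1) * f (t + 2)
              = psum f (t + 1) * (f (t + 2) * f (t + 2)) + f (t + 2) * f (t + 2) * f (t + 2) := by
            rw [psum_succ]; ring
          calc psum f (t + 1) * f (t + 1 + 2) * f (t + 2)
              = psum f t * f (t + 2) * f (t + 3) + f (t + 1) * f (t + 3) * f (t + 2) := e1
            _ ≤ psum f (t + 1) * f (t + 1) * f (t + 3) + f (t + 2) * f (t + 2) * f (t + 2) :=
                Nat.add_le_add b1 b3
            _ ≤ psum f (t + 1) * (f (t + 2) * f (t + 2)) + f (t + 2) * f (t + 2) * f (t + 2) :=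
                Nat.add_le_add_right b2 _
            _ = psum f (t + 1 + 1) * f (t + 1 + 1) * f (t + 2) := e2.symm
        exact Nat.le_of_mul_le_mul_right key (Nat.pos_of_ne_zero hz)

lemma logConc_psum {f : ℕ → ℕ} (hLC : LogConc f) (hIS : IntervalSupp f) :
    LogConc (psum f) := by
  intro t
  have e1 : psum f (t + 2) = psum f (t + 1) + f (t + 2) := psum_succ f (t + 1)
  have e2 : psum f (t + 1) = psum f t + f (t + 1) := psum_succ f t
  calc psum f t * psum f (t + 2) = psum f t * psum f (t + 1) + psum f t * f (t + 2) := by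
        rw [e1]; ring
    _ ≤ psum f t * psum f (t + 1) + psum f (t + 1) * f (t + 1) :=
        Nat.add_le_add_left (psum_cross hLC hIS t) _
    _ = (psum f t + f (t + 1)) * psum f (t + 1) := by ring
    _ = psum f (t + 1) * psum f (t + 1) := by rw [← e2]

lemma intervalSupp_psum {f : ℕ → ℕ} : IntervalSupp (psum f) := by
  intro a b c hab _ ha _
  intro hb
  have : psum f a ≤ psum f b := psum_mono f hab
  omega

lemma logConc_trunc {P : ℕ → Prop} {f : ℕ → ℕ} (hP : IntervalP P) (hLC : LogConc f) :
    LogConc (trunc P f) := by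
  intro t
  unfold trunc
  by_cases h1 : P t
  · by_cases h2 : P (t + 2)
    · have hmid : P (t + 1) := hP t (t + 1) (t + 2) (by omega) (by omega) h1 h2
      simp only [h1, h2, hmid, if_true]
      exact hLC t
    · simp [h2]
  · simp [h1]

lemma intervalSupp_trunc {P : ℕ → Prop} {f : ℕ → ℕ} (hP : IntervalP P) (hIS : IntervalSupp f) :
    IntervalSupp (trunc P f) := by
  intro a b c hab hbc ha hc
  unfold trunc at *
  by_cases hpa : P a
  · by_cases hpc : P c
    · have hpb : P b := hP a b c hab hbc hpa hpc
      simp only [hpa, if_true] at ha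
      simp only [hpc, if_true] at hc
      simp only [hpb, if_true]
      exact hIS a b c hab hbc ha hc
    · simp [hpc] at hc
  · simp [hpa] at ha

lemma logConc_mul {f g : ℕ → ℕ} (hf : LogConc f) (hg : LogConc g) :
    LogConc (fun t => f t * g t) := by
  intro t
  calc f t * g t * (f (t + 2) * g (t + 2)) = (f t * f (t + 2)) * (g t * g (t + 2)) := by ring
    _ ≤ (f (t + 1) * f (t + 1)) * (g (t + 1) * g (t + 1)) := Nat.mul_le_mul (hf t) (hg t)
    _ = f (t + 1) * g (t + 1) * (f (t + 1) * g (t + 1)) := by ring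
/-! ### Linear extensions as lists -/

section Ext

variable {Y : Type*} [PartialOrder Y] [Fintype Y]

/-- `l` is a linear-extension enumeration of the finite set `S`. -/
def IsExt (S : Finset Y) (l : List Y) : Prop :=
  l.Nodup ∧ (∀ z, z ∈ l ↔ z ∈ S) ∧ l.Pairwise (fun u v => ¬ v < u)

noncomputable def eS (S : Finset Y) : ℕ := Nat.card {l : List Y // IsExt S l}

instance extFinite (S : Finset Y) : Finite {l : List Y // IsExt S l} := by
  classical
  have hfin : Finite {l : List Y // l.length ≤ Fintype.card Y} :=
    List.finite_length_le Y (Fintype.card Y)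
  apply Finite.of_injective
    (fun p : {l : List Y // IsExt S l} =>
      (⟨p.1, p.2.1.length_le_card⟩ : {l : List Y // l.length ≤ Fintype.card Y}))
  intro a b h
  simp only [Subtype.mk.injEq] at h
  exact Subtype.ext h


lemma isExt_nil : IsExt (∅ : Finset Y) ([] : List Y) := by
  refine ⟨List.nodup_nil, ?_, List.Pairwise.nil⟩
  simp

lemma isExt_empty_unique {l : List Y} (h : IsExt (∅ : Finset Y) l) : l = [] := by
  rcases h with ⟨-, hmem, -⟩
  apply List.eq_nil_iff_forall_not_mem.2
  intro a ha
  simpa using (hmem a).1 ha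

lemma eS_empty : eS (∅ : Finset Y) = 1 := by
  have : Unique {l : List Y // IsExt (∅ : Finset Y) l} :=
    { default := ⟨[], isExt_nil⟩
      uniq := fun l => Subtype.ext (isExt_empty_unique l.2) }
  exact Nat.card_unique

lemma isExt_ne_nil {S : Finset Y} {l : List Y} (h : IsExt S l) (hS : S.Nonempty) : l ≠ [] := by
  rcases hS with ⟨m, hm⟩
  intro hnil
  rw [hnil] at h
  simpa using (h.2.1 m).2 hm

lemma isExt_append_max {S : Finset Y} {m : Y} {l : List Y}
    (hm : m ∈ S) (hmax : ∀ u ∈ S, ¬ m < u)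
    (hl : IsExt (S.erase m) l) : IsExt S (l ++ [m]) := by
  obtain ⟨hnd, hmem, hpw⟩ := hl
  have hmnotl : m ∉ l := fun hc => by simpa using (hmem m).1 hc
  refine ⟨?_, ?_, ?_⟩
  · rw [List.nodup_append]
    exact ⟨hnd, List.nodup_singleton m, by
      intro a ha b hb
      simp only [List.mem_singleton] at hb
      subst hb; rintro rfl
      exact hmnotl ha⟩
  · intro z
    simp only [List.mem_append, List.mem_singleton, hmem z, Finset.mem_erase]
    constructor
    · rintro (⟨-, hz⟩ | rfl) <;> assumption
    · intro hz
      by_cases hzm : z = m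
      · exact Or.inr hzm
      · exact Or.inl ⟨hzm, hz⟩
  · rw [List.pairwise_append]
    refine ⟨hpw, List.pairwise_singleton _ _, ?_⟩
    intro a ha b hb
    simp only [List.mem_singleton] at hb
    subst hb
    intro hlt
    have haS : a ∈ S := ((hmem a).1 ha |> Finset.mem_of_mem_erase)
    exact hmax a haS hlt

lemma isExt_split {S : Finset Y} {l : List Y} (h : IsExt S l) (hne : l ≠ []) :
    (l.getLast hne ∈ S ∧ ∀ u ∈ S, ¬ l.getLast hne < u) ∧
      IsExt (S.erase (l.getLast hne)) l.dropLast := by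
  classical
  obtain ⟨hnd, hmem, hpw⟩ := h
  set m := l.getLast hne with hm
  have hdl : l.dropLast ++ [m] = l := List.dropLast_append_getLast hne
  have hmS : m ∈ S := (hmem m).1 (List.getLast_mem hne)
  have hndsplit := hnd
  rw [← hdl, List.nodup_append] at hndsplit
  obtain ⟨hnd1, -, hdisj⟩ := hndsplit
  have hmnot : m ∉ l.dropLast := fun hc => hdisj m hc m (List.mem_singleton_self m) rfl
  have hpwsplit := hpw
  rw [← hdl, List.pairwise_append] at hpwsplit
  obtain ⟨hpw1, -, hcross⟩ := hpwsplit
  constructor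
  · refine ⟨hmS, ?_⟩
    intro u hu hlt
    have hul : u ∈ l := (hmem u).2 hu
    rw [← hdl, List.mem_append] at hul
    rcases hul with hul | hul
    · exact hcross u hul m (by simp) hlt
    · simp only [List.mem_singleton] at hul
      subst hul
      exact lt_irrefl _ hlt
  · refine ⟨hnd1, ?_, hpw1⟩
    intro z
    rw [Finset.mem_erase]
    constructor
    · intro hz
      refine ⟨fun hc => hmnot (hc ▸ hz), (hmem z).1 ?_⟩
      rw [← hdl, List.mem_append]; exact Or.inl hz
    · rintro ⟨hzm, hz⟩
      have := (hmem z).2 hz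
      rw [← hdl, List.mem_append] at this
      rcases this with h' | h'
      · exact h'
      · simp only [List.mem_singleton] at h'
        exact absurd h' hzm

lemma eS_erase_of_unique_max {S : Finset Y} {m : Y}
    (hm : m ∈ S) (hmax : ∀ u ∈ S, ¬ m < u)
    (huniq : ∀ u ∈ S, (∀ w ∈ S, ¬ u < w) → u = m) :
    eS S = eS (S.erase m) := by
  classical
  symm
  apply Nat.card_eq_of_bijective
    (fun p : {l : List Y // IsExt (S.erase m) l} =>
      (⟨p.1 ++ [m], isExt_append_max hm hmax p.2⟩ : {l : List Y // IsExt S l}))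
  constructor
  · intro a b hab
    apply Subtype.ext
    have := congrArg Subtype.val hab
    simpa using List.append_cancel_right this
  · rintro ⟨l, hl⟩
    have hne : l ≠ [] := isExt_ne_nil hl ⟨m, hm⟩
    obtain ⟨⟨hlast_mem, hlast_max⟩, hrest⟩ := isExt_split hl hne
    have heq : l.getLast hne = m := huniq _ hlast_mem hlast_max
    refine ⟨⟨l.dropLast, heq ▸ hrest⟩, ?_⟩
    apply Subtype.ext
    simp only
    rw [← heq]
    exact List.dropLast_append_getLast hne

lemma eS_of_two_max {S : Finset Y} {m₁ m₂ : Y}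
    (hm₁ : m₁ ∈ S) (hmax₁ : ∀ u ∈ S, ¬ m₁ < u)
    (hm₂ : m₂ ∈ S) (hmax₂ : ∀ u ∈ S, ¬ m₂ < u) (hne : m₁ ≠ m₂)
    (huniq : ∀ u ∈ S, (∀ w ∈ S, ¬ u < w) → u = m₁ ∨ u = m₂) :
    eS S = eS (S.erase m₁) + eS (S.erase m₂) := by
  classical
  show Nat.card {l : List Y // IsExt S l} =
    Nat.card {l : List Y // IsExt (S.erase m₁) l} + Nat.card {l : List Y // IsExt (S.erase m₂) l}
  rw [← Nat.card_sum]
  symm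
  apply Nat.card_eq_of_bijective
    (fun p : {l : List Y // IsExt (S.erase m₁) l} ⊕ {l : List Y // IsExt (S.erase m₂) l} =>
      (Sum.elim
        (fun q : {l : List Y // IsExt (S.erase m₁) l} =>
          (⟨q.1 ++ [m₁], isExt_append_max hm₁ hmax₁ q.2⟩ : {l : List Y // IsExt S l}))
        (fun q : {l : List Y // IsExt (S.erase m₂) l} =>
          (⟨q.1 ++ [m₂], isExt_append_max hm₂ hmax₂ q.2⟩ : {l : List Y // IsExt S l})) p))
  constructor
  · rintro (a | a) (b | b) hab <;>
      (try (have := congrArg Subtype.val hab; simp only [Sum.elim_inl, Sum.elim_inr] at this))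
    · exact congrArg Sum.inl (Subtype.ext (List.append_cancel_right this))
    · exact absurd (by
        have h1 : (a.1 ++ [m₁]).getLast (by simp) = m₁ := List.getLast_concat
        have h2 : (b.1 ++ [m₂]).getLast (by simp) = m₂ := List.getLast_concat
        rw [← h1]
        simp only [this]
        rw [h2]) hne
    · exact absurd (by
        have h1 : (b.1 ++ [m₁]).getLast (by simp) = m₁ := List.getLast_concat
        have h2 : (a.1 ++ [m₂]).getLast (by simp) = m₂ := List.getLast_concat
        rw [← h1]
        simp only [← this]
        rw [h2]) hne.symm
    · exact congrArg Sum.inr (Subtype.ext (List.append_cancel_right this))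
  · rintro ⟨l, hl⟩
    have hne' : l ≠ [] := isExt_ne_nil hl ⟨m₁, hm₁⟩
    obtain ⟨⟨hlast_mem, hlast_max⟩, hrest⟩ := isExt_split hl hne'
    have hdl : l.dropLast ++ [l.getLast hne'] = l := List.dropLast_append_getLast hne'
    rcases huniq _ hlast_mem hlast_max with heq | heq
    · refine ⟨Sum.inl ⟨l.dropLast, heq ▸ hrest⟩, ?_⟩
      apply Subtype.ext
      simp only [Sum.elim_inl]
      rw [← heq]; exact hdl
    · refine ⟨Sum.inr ⟨l.dropLast, heq ▸ hrest⟩, ?_⟩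
      apply Subtype.ext
      simp only [Sum.elim_inr]
      rw [← heq]; exact hdl

end Ext
/-! ### Chains in a finset, ranks, bottom segments -/

section Chains

variable {Y : Type*} [PartialOrder Y]

/-- `C` is a chain (as a finset). -/
def FChain (C : Finset Y) : Prop := ∀ u ∈ C, ∀ v ∈ C, u ≤ v ∨ v ≤ u

/-- rank of `u` along `C`: the number of elements of `C` that are `≤ u`. -/
noncomputable def rk (C : Finset Y) (u : Y) : ℕ := (C.filter (fun v => v ≤ u)).card

/-- the bottom `s` elements of the chain `C`. -/
noncomputable def bot (C : Finset Y) (s : ℕ) : Finset Y := C.filter (fun u => rk C u ≤ s)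

lemma rk_pos {C : Finset Y} {u : Y} (hu : u ∈ C) : 1 ≤ rk C u := by
  have h : u ∈ C.filter (fun v => v ≤ u) := Finset.mem_filter.2 ⟨hu, le_refl u⟩
  show 1 ≤ (C.filter (fun v => v ≤ u)).card
  exact Finset.card_pos.2 ⟨u, h⟩

lemma rk_le_card (C : Finset Y) (u : Y) : rk C u ≤ C.card :=
  Finset.card_le_card (Finset.filter_subset _ _)

lemma rk_mono (C : Finset Y) {u v : Y} (h : u ≤ v) : rk C u ≤ rk C v := by
  apply Finset.card_le_card
  intro w hw
  rw [Finset.mem_filter] at hw ⊢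
  exact ⟨hw.1, le_trans hw.2 h⟩

lemma rk_lt_of_lt {C : Finset Y} {u v : Y} (hv : v ∈ C) (h : u < v) : rk C u < rk C v := by
  apply Finset.card_lt_card
  constructor
  · intro w hw
    rw [Finset.mem_filter] at hw ⊢
    exact ⟨hw.1, le_trans hw.2 h.le⟩
  · intro hsub
    have : v ∈ C.filter (fun w => w ≤ u) := hsub (Finset.mem_filter.2 ⟨hv, le_refl v⟩)
    rw [Finset.mem_filter] at this
    exact absurd (lt_of_le_of_lt this.2 h) (lt_irrefl v)

lemma rk_injOn {C : Finset Y} (hC : FChain C) {u v : Y} (hu : u ∈ C) (hv : v ∈ C)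
    (h : rk C u = rk C v) : u = v := by
  by_contra hne
  rcases hC u hu v hv with hle | hle
  · have := rk_lt_of_lt hv (lt_of_le_of_ne hle hne)
    omega
  · have := rk_lt_of_lt hu (lt_of_le_of_ne hle (Ne.symm hne))
    omega

lemma mem_bot {C : Finset Y} {s : ℕ} {u : Y} : u ∈ bot C s ↔ u ∈ C ∧ rk C u ≤ s :=
  Finset.mem_filter

lemma bot_subset (C : Finset Y) (s : ℕ) : bot C s ⊆ C := Finset.filter_subset _ _

lemma bot_mono (C : Finset Y) {s s' : ℕ} (h : s ≤ s') : bot C s ⊆ bot C s' := by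
  intro u hu
  rw [mem_bot] at hu ⊢
  exact ⟨hu.1, le_trans hu.2 h⟩

lemma bot_zero (C : Finset Y) : bot C 0 = ∅ := by
  ext u
  simp only [mem_bot, Finset.notMem_empty, iff_false]
  rintro ⟨hu, hr⟩
  have := rk_pos hu
  omega

lemma bot_card_ge (C : Finset Y) (s : ℕ) (hs : s ≥ C.card) : bot C s = C := by
  ext u
  rw [mem_bot]
  exact ⟨fun h => h.1, fun h => ⟨h, le_trans (rk_le_card C u) hs⟩⟩

lemma rk_image {C : Finset Y} (hC : FChain C) :
    C.image (rk C) = Finset.Icc 1 C.card := by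
  classical
  apply Finset.eq_of_subset_of_card_le
  · intro k hk
    rw [Finset.mem_image] at hk
    obtain ⟨u, hu, rfl⟩ := hk
    rw [Finset.mem_Icc]
    exact ⟨rk_pos hu, rk_le_card C u⟩
  · rw [Nat.card_Icc]
    have : (C.image (rk C)).card = C.card :=
      Finset.card_image_of_injOn (fun u hu v hv h => rk_injOn hC hu hv h)
    omega

lemma rk_surjOn {C : Finset Y} (hC : FChain C) {k : ℕ} (h1 : 1 ≤ k) (h2 : k ≤ C.card) :
    ∃ u ∈ C, rk C u = k := by
  classical
  have : k ∈ C.image (rk C) := by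
    rw [rk_image hC, Finset.mem_Icc]
    exact ⟨h1, h2⟩
  rw [Finset.mem_image] at this
  obtain ⟨u, hu, hk⟩ := this
  exact ⟨u, hu, hk⟩

lemma bot_card {C : Finset Y} (hC : FChain C) {s : ℕ} (hs : s ≤ C.card) :
    (bot C s).card = s := by
  classical
  have himg : (bot C s).image (rk C) = Finset.Icc 1 s := by
    ext k
    rw [Finset.mem_image, Finset.mem_Icc]
    constructor
    · rintro ⟨u, hu, rfl⟩
      rw [mem_bot] at hu
      exact ⟨rk_pos hu.1, hu.2⟩
    · rintro ⟨h1, h2⟩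
      obtain ⟨u, hu, hk⟩ := rk_surjOn hC h1 (le_trans h2 hs)
      exact ⟨u, mem_bot.2 ⟨hu, le_of_eq_of_le hk h2⟩, hk⟩
  have hcard : (bot C s).card = ((bot C s).image (rk C)).card :=
    (Finset.card_image_of_injOn
      (fun u hu v hv h => rk_injOn hC (bot_subset C s hu) (bot_subset C s hv) h)).symm
  rw [hcard, himg, Nat.card_Icc]
  omega

lemma chain_exists_greatest {C : Finset Y} (hC : FChain C) (hne : C.Nonempty) :
    ∃ m ∈ C, ∀ u ∈ C, u ≤ m := by
  obtain ⟨m, hm, hmax⟩ := exists_maximal_old C hne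
  refine ⟨m, hm, ?_⟩
  intro u hu
  rcases hC u hu m hm with h | h
  · exact h
  · rcases eq_or_lt_of_le h with rfl | h'
    · exact le_refl _
    · exact absurd h' (hmax u hu)

lemma fchain_subset {C D : Finset Y} (hC : FChain C) (h : D ⊆ C) : FChain D :=
  fun u hu v hv => hC u (h hu) v (h hv)

/-- top element of a nonempty bottom segment. -/
lemma bot_top {C : Finset Y} (hC : FChain C) {s : ℕ} (h1 : 1 ≤ s) (h2 : s ≤ C.card) :
    ∃ m, m ∈ bot C s ∧ rk C m = s ∧ (∀ u ∈ bot C s, u ≤ m) ∧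
      (bot C s).erase m = bot C (s - 1) := by
  have hne : (bot C s).Nonempty := by
    rw [← Finset.card_pos, bot_card hC h2]
    omega
  obtain ⟨m, hm, hgr⟩ := chain_exists_greatest (fchain_subset hC (bot_subset C s)) hne
  have hmC : m ∈ C := bot_subset C s hm
  have hrk : rk C m = s := by
    have hle : C.filter (fun v => v ≤ m) ⊆ bot C s := by
      intro v hv
      rw [Finset.mem_filter] at hv
      rw [mem_bot]
      exact ⟨hv.1, le_trans (rk_mono C hv.2) (mem_bot.1 hm).2⟩
    have hge : bot C s ⊆ C.filter (fun v => v ≤ m) := by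
      intro v hv
      rw [Finset.mem_filter]
      exact ⟨bot_subset C s hv, hgr v hv⟩
    have := Finset.Subset.antisymm hle hge
    rw [rk, this, bot_card hC h2]
  refine ⟨m, hm, hrk, hgr, ?_⟩
  ext u
  rw [Finset.mem_erase, mem_bot, mem_bot]
  constructor
  · rintro ⟨hne', hu, hr⟩
    refine ⟨hu, ?_⟩
    rcases Nat.lt_or_ge (rk C u) s with h' | h'
    · omega
    · exact absurd (rk_injOn hC hu hmC (by omega)) hne'
  · rintro ⟨hu, hr⟩
    have : rk C u ≠ s := by omega
    exact ⟨fun hc => this (hc ▸ hrk), hu, by omega⟩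

lemma bot_insert_top {C : Finset Y} (hC : FChain C) {x : Y} (hx : x ∈ C) :
    insert x (bot C (rk C x - 1)) = bot C (rk C x) ∧ x ∉ bot C (rk C x - 1) := by
  have h1 : 1 ≤ rk C x := rk_pos hx
  have h2 : rk C x ≤ C.card := rk_le_card C x
  obtain ⟨m, hm, hrk, -, herase⟩ := bot_top hC h1 h2
  have hmx : m = x := rk_injOn hC (bot_subset _ _ hm) hx hrk
  subst hmx
  constructor
  · rw [← herase, Finset.insert_erase hm]
  · rw [← herase]
    exact fun hc => (Finset.mem_erase.1 hc).1 rfl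

/-- a downward closed subset of a chain is a bottom segment. -/
lemma chain_downclosed_eq_bot {C D : Finset Y} (hC : FChain C) (hsub : D ⊆ C)
    (hdc : ∀ u ∈ C, ∀ v ∈ D, u ≤ v → u ∈ D) : D = bot C D.card := by
  ext u
  rw [mem_bot]
  constructor
  · intro hu
    refine ⟨hsub hu, ?_⟩
    apply Finset.card_le_card
    intro v hv
    rw [Finset.mem_filter] at hv
    exact hdc v hv.1 u hu hv.2
  · rintro ⟨huC, hr⟩
    by_contra hu
    have hDsub : D ⊆ (C.filter (fun v => v ≤ u)).erase u := by
      intro v hv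
      have hvC := hsub hv
      rcases hC u huC v hvC with h | h
      · exact absurd (hdc u huC v hv h) hu
      · rw [Finset.mem_erase, Finset.mem_filter]
        exact ⟨fun hc => hu (hc ▸ hv), hvC, h⟩
    have hcard := Finset.card_le_card hDsub
    have hu_mem : u ∈ C.filter (fun v => v ≤ u) := Finset.mem_filter.2 ⟨huC, le_refl u⟩
    have := Finset.card_erase_of_mem hu_mem
    have hpos : 1 ≤ rk C u := rk_pos huC
    rw [this] at hcard
    unfold rk at hr hpos
    omega

end Chains
/-! ### Ideals of a poset partitioned into two chains -/

section Core

variable {Y : Type*} [PartialOrder Y] [Fintype Y]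

/-- `S` is a down-set. -/
def DnS (S : Finset Y) : Prop := ∀ u v : Y, u < v → v ∈ S → u ∈ S

noncomputable def II (C₁ C₂ : Finset Y) (s t : ℕ) : Finset Y := bot C₁ s ∪ bot C₂ t

lemma II_comm (C₁ C₂ : Finset Y) (s t : ℕ) : II C₁ C₂ s t = II C₂ C₁ t s :=
  Finset.union_comm _ _

lemma II_zero (C₁ C₂ : Finset Y) : II C₁ C₂ 0 0 = ∅ := by
  rw [II, bot_zero, bot_zero, Finset.union_empty]

lemma mem_II {C₁ C₂ : Finset Y} {s t : ℕ} {u : Y} :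
    u ∈ II C₁ C₂ s t ↔ u ∈ bot C₁ s ∨ u ∈ bot C₂ t := Finset.mem_union

lemma II_card {C₁ C₂ : Finset Y} (hC₁ : FChain C₁) (hC₂ : FChain C₂)
    (hdisj : Disjoint C₁ C₂) {s t : ℕ} (hs : s ≤ C₁.card) (ht : t ≤ C₂.card) :
    (II C₁ C₂ s t).card = s + t := by
  classical
  rw [II, Finset.card_union_of_disjoint
    (Finset.disjoint_of_subset_left (bot_subset C₁ s)
      (Finset.disjoint_of_subset_right (bot_subset C₂ t) hdisj)),
    bot_card hC₁ hs, bot_card hC₂ ht]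

lemma II_mono_t (C₁ C₂ : Finset Y) (s : ℕ) {t t' : ℕ} (h : t ≤ t') :
    II C₁ C₂ s t ⊆ II C₁ C₂ s t' :=
  Finset.union_subset_union (Finset.Subset.refl _) (bot_mono C₂ h)

lemma Dn_interval {C₁ C₂ : Finset Y} {s t₁ t₂ t₃ : ℕ}
    (h12 : t₁ ≤ t₂) (h23 : t₂ ≤ t₃)
    (hD1 : DnS (II C₁ C₂ s t₁)) (hD3 : DnS (II C₁ C₂ s t₃)) :
    DnS (II C₁ C₂ s t₂) := by
  intro u v huv hv
  rcases mem_II.1 hv with hv1 | hv2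
  · have hvI : v ∈ II C₁ C₂ s t₁ := mem_II.2 (Or.inl hv1)
    have := hD1 u v huv hvI
    exact II_mono_t C₁ C₂ s h12 this
  · have hvI : v ∈ II C₁ C₂ s t₃ := mem_II.2 (Or.inr (bot_mono C₂ h23 hv2))
    have hu3 := hD3 u v huv hvI
    rcases mem_II.1 hu3 with hu1 | hu2
    · exact mem_II.2 (Or.inl hu1)
    · refine mem_II.2 (Or.inr ?_)
      rw [mem_bot] at hu2 hv2 ⊢
      exact ⟨hu2.1, le_trans (rk_mono C₂ huv.le) hv2.2⟩

/-- the top element of the first chain part, with its properties. -/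
lemma II_top1 {C₁ : Finset Y} (C₂ : Finset Y) (hC₁ : FChain C₁) {s : ℕ} (t : ℕ)
    (h1 : 1 ≤ s) (h2 : s ≤ C₁.card) (hdisj : Disjoint C₁ C₂) :
    ∃ m, m ∈ C₁ ∧ rk C₁ m = s ∧ m ∈ II C₁ C₂ s t ∧
      (II C₁ C₂ s t).erase m = II C₁ C₂ (s - 1) t ∧ (∀ u ∈ bot C₁ s, u ≤ m) := by
  classical
  obtain ⟨m, hm, hrk, hgr, herase⟩ := bot_top hC₁ h1 h2
  have hmC₁ : m ∈ C₁ := bot_subset _ _ hm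
  refine ⟨m, hmC₁, hrk, mem_II.2 (Or.inl hm), ?_, hgr⟩
  rw [II, Finset.erase_union_distrib, herase,
    Finset.erase_eq_of_notMem (fun hc => (Finset.disjoint_left.1 hdisj) hmC₁ (bot_subset _ _ hc))]
  rfl

/-- a maximal element of `II s t` is the top of one of the two chain parts. -/
lemma II_max_mem {C₁ C₂ : Finset Y} (hC₁ : FChain C₁) (hC₂ : FChain C₂)
    {s t : ℕ} (hs : s ≤ C₁.card) (ht : t ≤ C₂.card) {m : Y}
    (hm : m ∈ II C₁ C₂ s t) (hmax : ∀ u ∈ II C₁ C₂ s t, ¬ m < u) :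
    (m ∈ C₁ ∧ rk C₁ m = s) ∨ (m ∈ C₂ ∧ rk C₂ m = t) := by
  rcases mem_II.1 hm with hm1 | hm2
  · left
    have h1 : 1 ≤ s := le_trans (rk_pos (mem_bot.1 hm1).1) (mem_bot.1 hm1).2
    obtain ⟨mt, hmt, hrk, hgr, -⟩ := bot_top hC₁ h1 hs
    have hle : m ≤ mt := hgr m hm1
    rcases eq_or_lt_of_le hle with rfl | hlt
    · exact ⟨(mem_bot.1 hm1).1, hrk⟩
    · exact absurd hlt (hmax mt (mem_II.2 (Or.inl hmt)))
  · right
    have h1 : 1 ≤ t := le_trans (rk_pos (mem_bot.1 hm2).1) (mem_bot.1 hm2).2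
    obtain ⟨mt, hmt, hrk, hgr, -⟩ := bot_top hC₂ h1 ht
    have hle : m ≤ mt := hgr m hm2
    rcases eq_or_lt_of_le hle with rfl | hlt
    · exact ⟨(mem_bot.1 hm2).1, hrk⟩
    · exact absurd hlt (hmax mt (mem_II.2 (Or.inr hmt)))

/-- the top of the first chain part is maximal iff removing it leaves a down-set. -/
lemma II_top1_max_iff {C₁ C₂ : Finset Y} {s t : ℕ} {m : Y}
    (hm : m ∈ II C₁ C₂ s t) (herase : (II C₁ C₂ s t).erase m = II C₁ C₂ (s - 1) t)
    (hDn : DnS (II C₁ C₂ s t)) :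
    (∀ u ∈ II C₁ C₂ s t, ¬ m < u) ↔ DnS (II C₁ C₂ (s - 1) t) := by
  constructor
  · intro hmax u v huv hv
    have hvS : v ∈ II C₁ C₂ s t := by
      rw [← herase] at hv
      exact Finset.mem_of_mem_erase hv
    have huS : u ∈ II C₁ C₂ s t := hDn u v huv hvS
    rw [← herase, Finset.mem_erase]
    refine ⟨?_, huS⟩
    rintro rfl
    exact hmax v hvS huv
  · intro hDn' u hu hlt
    have hune : u ≠ m := fun hc => by
      subst hc
      exact lt_irrefl u hlt
    have hmem : u ∈ (II C₁ C₂ s t).erase m := Finset.mem_erase.2 ⟨hune, hu⟩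
    rw [herase] at hmem
    have hmem' := hDn' m u hlt hmem
    rw [← herase, Finset.mem_erase] at hmem'
    exact hmem'.1 rfl

/-- a maximal element of `II s t` which is the top of the first chain part
    certifies the first recursion condition. -/
lemma II_max_top1 {C₁ C₂ : Finset Y} (hC₁ : FChain C₁)
    (hdisj : Disjoint C₁ C₂) {s t : ℕ} (hs : s ≤ C₁.card)
    (hDn : DnS (II C₁ C₂ s t)) {u : Y} (humax : ∀ w ∈ II C₁ C₂ s t, ¬ u < w)
    (huC : u ∈ C₁) (hurk : rk C₁ u = s) :
    1 ≤ s ∧ DnS (II C₁ C₂ (s - 1) t) ∧ (II C₁ C₂ s t).erase u = II C₁ C₂ (s - 1) t := by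
  have h1 : 1 ≤ s := hurk ▸ rk_pos huC
  obtain ⟨m, hmC, hmrk, hmmem, hmerase, -⟩ := II_top1 C₂ hC₁ t h1 hs hdisj
  have hum : u = m := rk_injOn hC₁ huC hmC (by rw [hurk, hmrk])
  subst hum
  exact ⟨h1, (II_top1_max_iff hmmem hmerase hDn).1 humax, hmerase⟩

lemma II_nonempty {C₁ C₂ : Finset Y} (hC₁ : FChain C₁) (hC₂ : FChain C₂)
    {s t : ℕ} (hs : s ≤ C₁.card) (ht : t ≤ C₂.card) (hne : ¬(s = 0 ∧ t = 0)) :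
    (II C₁ C₂ s t).Nonempty := by
  by_cases h : 1 ≤ s
  · obtain ⟨w, hw, hwr⟩ := rk_surjOn hC₁ (le_refl 1) (le_trans h hs)
    exact ⟨w, mem_II.2 (Or.inl (mem_bot.2 ⟨hw, by omega⟩))⟩
  · have h' : 1 ≤ t := by omega
    obtain ⟨w, hw, hwr⟩ := rk_surjOn hC₂ (le_refl 1) (le_trans h' ht)
    exact ⟨w, mem_II.2 (Or.inr (mem_bot.2 ⟨hw, by omega⟩))⟩

lemma II_cond_or {C₁ C₂ : Finset Y} (hC₁ : FChain C₁) (hC₂ : FChain C₂)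
    (hdisj : Disjoint C₁ C₂) {s t : ℕ} (hs : s ≤ C₁.card) (ht : t ≤ C₂.card)
    (hDn : DnS (II C₁ C₂ s t)) (hne : ¬(s = 0 ∧ t = 0)) :
    (1 ≤ s ∧ DnS (II C₁ C₂ (s - 1) t)) ∨ (1 ≤ t ∧ DnS (II C₁ C₂ s (t - 1))) := by
  obtain ⟨m, hm, hmax'⟩ := exists_maximal_old _ (II_nonempty hC₁ hC₂ hs ht hne)
  have hmax : ∀ w ∈ II C₁ C₂ s t, ¬ m < w := hmax'
  rcases II_max_mem hC₁ hC₂ hs ht hm hmax with ⟨hmC, hmrk⟩ | ⟨hmC, hmrk⟩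
  · obtain ⟨h1, hD, -⟩ := II_max_top1 hC₁ hdisj hs hDn hmax hmC hmrk
    exact Or.inl ⟨h1, hD⟩
  · have hDn' : DnS (II C₂ C₁ t s) := by rwa [← II_comm]
    have hmax2 : ∀ w ∈ II C₂ C₁ t s, ¬ m < w := by rw [← II_comm]; exact hmax
    have hm2 : m ∈ II C₂ C₁ t s := by rw [← II_comm]; exact hm
    obtain ⟨h1, hD, -⟩ := II_max_top1 hC₂ hdisj.symm ht hDn' hmax2 hmC hmrk
    right
    refine ⟨h1, ?_⟩
    rwa [II_comm]

/-- The main recursion for the number of linear extensions of `II s t`. -/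
lemma II_rec {C₁ C₂ : Finset Y} (hC₁ : FChain C₁) (hC₂ : FChain C₂)
    (hdisj : Disjoint C₁ C₂) {s t : ℕ} (hs : s ≤ C₁.card) (ht : t ≤ C₂.card)
    (hDn : DnS (II C₁ C₂ s t)) (hne : ¬(s = 0 ∧ t = 0)) :
    eS (II C₁ C₂ s t) =
      (if 1 ≤ s ∧ DnS (II C₁ C₂ (s - 1) t) then eS (II C₁ C₂ (s - 1) t) else 0) +
      (if 1 ≤ t ∧ DnS (II C₁ C₂ s (t - 1)) then eS (II C₁ C₂ s (t - 1)) else 0) := by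
  classical
  by_cases hcond1 : 1 ≤ s ∧ DnS (II C₁ C₂ (s - 1) t)
  · obtain ⟨m₁, hm₁C, hm₁rk, hm₁mem, hm₁erase, -⟩ := II_top1 C₂ hC₁ t hcond1.1 hs hdisj
    have hm₁max : ∀ u ∈ II C₁ C₂ s t, ¬ m₁ < u :=
      (II_top1_max_iff hm₁mem hm₁erase hDn).2 hcond1.2
    by_cases hcond2 : 1 ≤ t ∧ DnS (II C₁ C₂ s (t - 1))
    · obtain ⟨m₂, hm₂C, hm₂rk, hm₂mem', hm₂erase', -⟩ :=
        II_top1 C₁ hC₂ s hcond2.1 ht hdisj.symm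
      have hm₂mem : m₂ ∈ II C₁ C₂ s t := by rw [II_comm]; exact hm₂mem'
      have hm₂erase : (II C₁ C₂ s t).erase m₂ = II C₁ C₂ s (t - 1) := by
        rw [II_comm, hm₂erase', II_comm]
      have hDn2 : DnS (II C₂ C₁ (t - 1) s) := by rw [← II_comm]; exact hcond2.2
      have hm₂max' : ∀ u ∈ II C₂ C₁ t s, ¬ m₂ < u :=
        (II_top1_max_iff hm₂mem' hm₂erase' (by rw [← II_comm]; exact hDn)).2 hDn2
      have hm₂max : ∀ u ∈ II C₁ C₂ s t, ¬ m₂ < u := by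
        rw [II_comm]; exact hm₂max'
      have hne12 : m₁ ≠ m₂ := fun hc =>
        (Finset.disjoint_left.1 hdisj) hm₁C (hc ▸ hm₂C)
      rw [if_pos hcond1, if_pos hcond2, ← hm₁erase, ← hm₂erase]
      apply eS_of_two_max hm₁mem hm₁max hm₂mem hm₂max hne12
      intro u hu humax
      rcases II_max_mem hC₁ hC₂ hs ht hu humax with ⟨huC, hurk⟩ | ⟨huC, hurk⟩
      · exact Or.inl (rk_injOn hC₁ huC hm₁C (by rw [hurk, hm₁rk]))
      · exact Or.inr (rk_injOn hC₂ huC hm₂C (by rw [hurk, hm₂rk]))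
    · rw [if_pos hcond1, if_neg hcond2, Nat.add_zero, ← hm₁erase]
      apply eS_erase_of_unique_max hm₁mem hm₁max
      intro u hu humax
      rcases II_max_mem hC₁ hC₂ hs ht hu humax with ⟨huC, hurk⟩ | ⟨huC, hurk⟩
      · exact rk_injOn hC₁ huC hm₁C (by rw [hurk, hm₁rk])
      · exfalso
        have hDn' : DnS (II C₂ C₁ t s) := by rw [← II_comm]; exact hDn
        have hmax2 : ∀ w ∈ II C₂ C₁ t s, ¬ u < w := by rw [← II_comm]; exact humax
        obtain ⟨h1, hD, -⟩ := II_max_top1 hC₂ hdisj.symm ht hDn' hmax2 huC hurk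
        exact hcond2 ⟨h1, by rwa [II_comm]⟩
  · by_cases hcond2 : 1 ≤ t ∧ DnS (II C₁ C₂ s (t - 1))
    · obtain ⟨m₂, hm₂C, hm₂rk, hm₂mem', hm₂erase', -⟩ :=
        II_top1 C₁ hC₂ s hcond2.1 ht hdisj.symm
      have hm₂mem : m₂ ∈ II C₁ C₂ s t := by rw [II_comm]; exact hm₂mem'
      have hm₂erase : (II C₁ C₂ s t).erase m₂ = II C₁ C₂ s (t - 1) := by
        rw [II_comm, hm₂erase', II_comm]
      have hDn2 : DnS (II C₂ C₁ (t - 1) s) := by rw [← II_comm]; exact hcond2.2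
      have hm₂max' : ∀ u ∈ II C₂ C₁ t s, ¬ m₂ < u :=
        (II_top1_max_iff hm₂mem' hm₂erase' (by rw [← II_comm]; exact hDn)).2 hDn2
      have hm₂max : ∀ u ∈ II C₁ C₂ s t, ¬ m₂ < u := by
        rw [II_comm]; exact hm₂max'
      rw [if_neg hcond1, if_pos hcond2, Nat.zero_add, ← hm₂erase]
      apply eS_erase_of_unique_max hm₂mem hm₂max
      intro u hu humax
      rcases II_max_mem hC₁ hC₂ hs ht hu humax with ⟨huC, hurk⟩ | ⟨huC, hurk⟩
      · exfalso
        obtain ⟨h1, hD, -⟩ := II_max_top1 hC₁ hdisj hs hDn humax huC hurk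
        exact hcond1 ⟨h1, hD⟩
      · exact rk_injOn hC₂ huC hm₂C (by rw [hurk, hm₂rk])
    · exact absurd (II_cond_or hC₁ hC₂ hdisj hs ht hDn hne)
        (by rw [not_or]; exact ⟨hcond1, hcond2⟩)

lemma eS_II_pos {C₁ C₂ : Finset Y} (hC₁ : FChain C₁) (hC₂ : FChain C₂)
    (hdisj : Disjoint C₁ C₂) : ∀ n {s t : ℕ}, s + t ≤ n → s ≤ C₁.card → t ≤ C₂.card →
    DnS (II C₁ C₂ s t) → 1 ≤ eS (II C₁ C₂ s t) := by
  intro n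
  induction n with
  | zero =>
      intro s t hn hs ht hDn
      have hs0 : s = 0 := by omega
      have ht0 : t = 0 := by omega
      subst hs0; subst ht0
      rw [II_zero, eS_empty]
  | succ n ih =>
      intro s t hn hs ht hDn
      by_cases hne : s = 0 ∧ t = 0
      · obtain ⟨rfl, rfl⟩ := hne
        rw [II_zero, eS_empty]
      · rw [II_rec hC₁ hC₂ hdisj hs ht hDn hne]
        rcases II_cond_or hC₁ hC₂ hdisj hs ht hDn hne with ⟨h1, hD⟩ | ⟨h1, hD⟩
        · have hih := ih (s := s - 1) (t := t) (by omega) (by omega) ht hD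
          have he : (if 1 ≤ s ∧ DnS (II C₁ C₂ (s - 1) t) then eS (II C₁ C₂ (s - 1) t) else 0)
              = eS (II C₁ C₂ (s - 1) t) := if_pos ⟨h1, hD⟩
          rw [he]
          omega
        · have hih := ih (s := s) (t := t - 1) (by omega) hs (by omega) hD
          have he : (if 1 ≤ t ∧ DnS (II C₁ C₂ s (t - 1)) then eS (II C₁ C₂ s (t - 1)) else 0)
              = eS (II C₁ C₂ s (t - 1)) := if_pos ⟨h1, hD⟩
          rw [he]
          omega

end Core
/-! ### The column sequences and their log-concavity -/

section Hseq

variable {Y : Type*} [PartialOrder Y] [Fintype Y]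

noncomputable def hseq (C₁ C₂ : Finset Y) (s : ℕ) : ℕ → ℕ :=
  fun t => if DnS (II C₁ C₂ s t) ∧ t ≤ C₂.card then eS (II C₁ C₂ s t) else 0

lemma PInterval (C₁ C₂ : Finset Y) (s : ℕ) :
    IntervalP (fun t => DnS (II C₁ C₂ s t) ∧ t ≤ C₂.card) := by
  intro a b c hab hbc ha hc
  exact ⟨Dn_interval hab hbc ha.1 hc.1, le_trans hbc hc.2⟩

lemma eS_II_zero_s {C₁ C₂ : Finset Y} (hC₁ : FChain C₁) (hC₂ : FChain C₂)
    (hdisj : Disjoint C₁ C₂) :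
    ∀ t, t ≤ C₂.card → DnS (II C₁ C₂ 0 t) → eS (II C₁ C₂ 0 t) = 1 := by
  intro t
  induction t with
  | zero =>
      intro _ _
      rw [II_zero, eS_empty]
  | succ t ih =>
      intro ht hDn
      rw [II_rec hC₁ hC₂ hdisj (Nat.zero_le _) ht hDn (by omega)]
      have h1 : (if 1 ≤ 0 ∧ DnS (II C₁ C₂ (0 - 1) (t + 1)) then eS (II C₁ C₂ (0 - 1) (t + 1))
          else 0) = 0 := if_neg (by rintro ⟨h, -⟩; omega)
      rcases II_cond_or hC₁ hC₂ hdisj (Nat.zero_le _) ht hDn (by omega) with ⟨h, -⟩ | ⟨-, hD⟩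
      · omega
      · have hD' : DnS (II C₁ C₂ 0 t) := by
          have : t + 1 - 1 = t := by omega
          rwa [this] at hD
        have h2 : (if 1 ≤ t + 1 ∧ DnS (II C₁ C₂ 0 (t + 1 - 1)) then eS (II C₁ C₂ 0 (t + 1 - 1))
            else 0) = eS (II C₁ C₂ 0 t) := by
          rw [if_pos ⟨by omega, hD⟩]
          congr 1
        rw [h1, h2, ih (by omega) hD']

lemma hseq_zero_eq {C₁ C₂ : Finset Y} (hC₁ : FChain C₁) (hC₂ : FChain C₂)
    (hdisj : Disjoint C₁ C₂) :
    hseq C₁ C₂ 0 = trunc (fun t => DnS (II C₁ C₂ 0 t) ∧ t ≤ C₂.card) (fun _ => 1) := by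
  funext t
  unfold hseq trunc
  by_cases hP : DnS (II C₁ C₂ 0 t) ∧ t ≤ C₂.card
  · rw [if_pos hP, if_pos hP, eS_II_zero_s hC₁ hC₂ hdisj t hP.2 hP.1]
  · rw [if_neg hP, if_neg hP]

lemma eS_psum {C₁ C₂ : Finset Y} (hC₁ : FChain C₁) (hC₂ : FChain C₂)
    (hdisj : Disjoint C₁ C₂) {s : ℕ} (hs1 : s + 1 ≤ C₁.card) :
    ∀ t, t ≤ C₂.card → DnS (II C₁ C₂ (s + 1) t) →
      eS (II C₁ C₂ (s + 1) t) =
        psum (trunc (fun t' => DnS (II C₁ C₂ (s + 1) t') ∧ t' ≤ C₂.card) (hseq C₁ C₂ s)) t := by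
  set P : ℕ → Prop := fun t' => DnS (II C₁ C₂ (s + 1) t') ∧ t' ≤ C₂.card with hP
  set g : ℕ → ℕ := trunc P (hseq C₁ C₂ s) with hg
  have hsub : s + 1 - 1 = s := by omega
  intro t
  induction t with
  | zero =>
      intro ht hDn
      rw [II_rec hC₁ hC₂ hdisj hs1 ht hDn (by omega)]
      have h2 : (if 1 ≤ 0 ∧ DnS (II C₁ C₂ (s + 1) (0 - 1)) then eS (II C₁ C₂ (s + 1) (0 - 1))
          else 0) = 0 := if_neg (by rintro ⟨h, -⟩; omega)
      have hpsum : psum g 0 = g 0 := by simp [psum]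
      rw [h2, hpsum, Nat.add_zero]
      have hgz : g 0 = hseq C₁ C₂ s 0 := by
        rw [hg]
        unfold trunc
        rw [if_pos (show P 0 from ⟨hDn, by omega⟩)]
      rw [hgz]
      unfold hseq
      rw [hsub]
      by_cases hD : DnS (II C₁ C₂ s 0)
      · rw [if_pos ⟨by omega, hD⟩, if_pos ⟨hD, by omega⟩]
      · rw [if_neg (by rintro ⟨-, h⟩; exact hD h), if_neg (by rintro ⟨h, -⟩; exact hD h)]
  | succ t ih =>
      intro ht hDn
      rw [II_rec hC₁ hC₂ hdisj hs1 ht hDn (by omega), psum_succ]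
      have htsub : t + 1 - 1 = t := by omega
      have hA : (if 1 ≤ s + 1 ∧ DnS (II C₁ C₂ (s + 1 - 1) (t + 1))
          then eS (II C₁ C₂ (s + 1 - 1) (t + 1)) else 0) = g (t + 1) := by
        rw [hsub, hg]
        unfold trunc
        rw [if_pos (show P (t + 1) from ⟨hDn, ht⟩)]
        unfold hseq
        by_cases hD : DnS (II C₁ C₂ s (t + 1))
        · rw [if_pos ⟨by omega, hD⟩, if_pos ⟨hD, ht⟩]
        · rw [if_neg (by rintro ⟨-, h⟩; exact hD h), if_neg (by rintro ⟨h, -⟩; exact hD h)]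
      have hB : (if 1 ≤ t + 1 ∧ DnS (II C₁ C₂ (s + 1) (t + 1 - 1))
          then eS (II C₁ C₂ (s + 1) (t + 1 - 1)) else 0) = psum g t := by
        rw [htsub]
        by_cases hD : DnS (II C₁ C₂ (s + 1) t)
        · rw [if_pos ⟨by omega, hD⟩]
          exact ih (by omega) hD
        · rw [if_neg (by rintro ⟨-, h⟩; exact hD h)]
          symm
          rw [psum_eq_zero_iff]
          intro k hk
          rw [hg]
          unfold trunc
          rw [if_neg]
          rintro ⟨hDk, -⟩
          exact hD (Dn_interval hk (by omega) hDk hDn)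
      rw [hA, hB, Nat.add_comm]

lemma hseq_succ_eq {C₁ C₂ : Finset Y} (hC₁ : FChain C₁) (hC₂ : FChain C₂)
    (hdisj : Disjoint C₁ C₂) {s : ℕ} (hs1 : s + 1 ≤ C₁.card) :
    hseq C₁ C₂ (s + 1) =
      trunc (fun t' => DnS (II C₁ C₂ (s + 1) t') ∧ t' ≤ C₂.card)
        (psum (trunc (fun t' => DnS (II C₁ C₂ (s + 1) t') ∧ t' ≤ C₂.card) (hseq C₁ C₂ s))) := by
  funext t
  unfold hseq trunc
  by_cases hP : DnS (II C₁ C₂ (s + 1) t) ∧ t ≤ C₂.card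
  · rw [if_pos hP, if_pos hP]
    exact eS_psum hC₁ hC₂ hdisj hs1 t hP.2 hP.1
  · rw [if_neg hP, if_neg hP]

lemma hseq_LC_IS {C₁ C₂ : Finset Y} (hC₁ : FChain C₁) (hC₂ : FChain C₂)
    (hdisj : Disjoint C₁ C₂) :
    ∀ s, s ≤ C₁.card → LogConc (hseq C₁ C₂ s) ∧ IntervalSupp (hseq C₁ C₂ s) := by
  intro s
  induction s with
  | zero =>
      intro _
      rw [hseq_zero_eq hC₁ hC₂ hdisj]
      have hconst : LogConc (fun _ : ℕ => (1 : ℕ)) := fun t => le_refl _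
      have hconstIS : IntervalSupp (fun _ : ℕ => (1 : ℕ)) := fun a b c _ _ _ _ => one_ne_zero
      exact ⟨logConc_trunc (PInterval C₁ C₂ 0) hconst,
        intervalSupp_trunc (PInterval C₁ C₂ 0) hconstIS⟩
  | succ s ih =>
      intro hs1
      obtain ⟨hLC, hIS⟩ := ih (by omega)
      rw [hseq_succ_eq hC₁ hC₂ hdisj hs1]
      have h1 := logConc_trunc (PInterval C₁ C₂ (s + 1)) hLC
      have h2 := intervalSupp_trunc (PInterval C₁ C₂ (s + 1)) hIS
      exact ⟨logConc_trunc (PInterval C₁ C₂ (s + 1)) (logConc_psum h1 h2),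
        intervalSupp_trunc (PInterval C₁ C₂ (s + 1)) intervalSupp_psum⟩

end Hseq
/-! ### Order-dual transfer -/

section Dual

variable {X : Type*} [PartialOrder X] [Fintype X]

noncomputable def dualF (C : Finset X) : Finset Xᵒᵈ := C.map (OrderDual.toDual).toEmbedding

lemma mem_dualF {C : Finset X} {u : Xᵒᵈ} : u ∈ dualF C ↔ OrderDual.ofDual u ∈ C :=
  Finset.mem_map_equiv

lemma card_dualF (C : Finset X) : (dualF C).card = C.card := Finset.card_map _

lemma fchain_dualF {C : Finset X} (hC : FChain C) : FChain (dualF C) := by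
  intro u hu v hv
  rcases hC _ (mem_dualF.1 hu) _ (mem_dualF.1 hv) with h | h
  · exact Or.inr h
  · exact Or.inl h

lemma disjoint_dualF {C D : Finset X} (h : Disjoint C D) : Disjoint (dualF C) (dualF D) := by
  rw [Finset.disjoint_left] at h ⊢
  intro u hu hv
  exact h (mem_dualF.1 hu) (mem_dualF.1 hv)

lemma eS_dualF (S : Finset X) : eS (dualF S) = eS S := by
  classical
  symm
  apply Nat.card_eq_of_bijective
    (fun p : {l : List X // IsExt S l} =>
      (⟨(p.1.map (OrderDual.toDual : X → Xᵒᵈ)).reverse, by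
        obtain ⟨hnd, hmem, hpw⟩ := p.2
        refine ⟨?_, ?_, ?_⟩
        · rw [List.nodup_reverse]
          exact hnd.map (fun a b h => congrArg OrderDual.ofDual h)
        · intro z
          rw [List.mem_reverse, List.mem_map, mem_dualF]
          constructor
          · rintro ⟨w, hw, rfl⟩
            exact (hmem w).1 hw
          · intro hz
            exact ⟨OrderDual.ofDual z, (hmem _).2 hz, rfl⟩
        · rw [List.pairwise_reverse, List.pairwise_map]
          exact hpw⟩ : {l : List Xᵒᵈ // IsExt (dualF S) l}))
  constructor
  · intro p q h
    apply Subtype.ext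
    have h' := congrArg Subtype.val h
    simp only at h'
    have h'' := congrArg List.reverse h'
    rw [List.reverse_reverse, List.reverse_reverse] at h''
    have := congrArg (List.map (OrderDual.ofDual : Xᵒᵈ → X)) h''
    rwa [List.map_map, List.map_map, show (OrderDual.ofDual : Xᵒᵈ → X) ∘
      (OrderDual.toDual : X → Xᵒᵈ) = id from rfl, List.map_id, List.map_id] at this
  · rintro ⟨l, hnd, hmem, hpw⟩
    refine ⟨⟨(l.reverse.map (OrderDual.ofDual : Xᵒᵈ → X)), ?_, ?_, ?_⟩, ?_⟩
    · exact (List.nodup_reverse.2 hnd).map (fun a b h => congrArg OrderDual.toDual h)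
    · intro z
      rw [List.mem_map]
      constructor
      · rintro ⟨w, hw, rfl⟩
        rw [List.mem_reverse] at hw
        exact mem_dualF.1 ((hmem w).1 hw)
      · intro hz
        refine ⟨OrderDual.toDual z, ?_, rfl⟩
        rw [List.mem_reverse]
        exact (hmem _).2 (mem_dualF.2 hz)
    · rw [List.pairwise_map, List.pairwise_reverse]
      exact hpw
    · apply Subtype.ext
      simp only
      simp only [List.map_reverse, List.reverse_reverse, List.map_map]
      exact List.map_id l

lemma rk_dualF {C : Finset X} (hC : FChain C) {u : X} (hu : u ∈ C) :
    rk (dualF C) (OrderDual.toDual u) = C.card + 1 - rk C u := by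
  classical
  have hfil : (dualF C).filter (fun v => v ≤ OrderDual.toDual u)
      = dualF (C.filter (fun v => u ≤ v)) := by
    ext v
    rw [Finset.mem_filter, mem_dualF, mem_dualF, Finset.mem_filter]
    exact ⟨fun ⟨h1, h2⟩ => ⟨h1, h2⟩, fun ⟨h1, h2⟩ => ⟨h1, h2⟩⟩
  have hcard : rk (dualF C) (OrderDual.toDual u) = (C.filter (fun v => u ≤ v)).card := by
    rw [rk, hfil, card_dualF]
  have hunion : (C.filter (fun v => v ≤ u)) ∪ (C.filter (fun v => u ≤ v)) = C := by
    ext v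
    rw [Finset.mem_union, Finset.mem_filter, Finset.mem_filter]
    constructor
    · rintro (⟨h, -⟩ | ⟨h, -⟩) <;> exact h
    · intro hv
      rcases hC v hv u hu with h | h
      · exact Or.inl ⟨hv, h⟩
      · exact Or.inr ⟨hv, h⟩
  have hinter : (C.filter (fun v => v ≤ u)) ∩ (C.filter (fun v => u ≤ v)) = {u} := by
    ext v
    rw [Finset.mem_inter, Finset.mem_filter, Finset.mem_filter, Finset.mem_singleton]
    constructor
    · rintro ⟨⟨-, h1⟩, -, h2⟩
      exact le_antisymm h1 h2
    · rintro rfl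
      exact ⟨⟨hu, le_refl _⟩, hu, le_refl _⟩
  have := Finset.card_union_add_card_inter (C.filter (fun v => v ≤ u)) (C.filter (fun v => u ≤ v))
  rw [hunion, hinter, Finset.card_singleton] at this
  have hrk : rk C u = (C.filter (fun v => v ≤ u)).card := rfl
  have hle : rk C u ≤ C.card := rk_le_card C u
  have hpos : 1 ≤ rk C u := rk_pos hu
  omega

lemma bot_dualF {C : Finset X} (hC : FChain C) {s : ℕ} (hs : s ≤ C.card) :
    bot (dualF C) s = dualF (C \ bot C (C.card - s)) := by
  classical
  ext v
  constructor
  · intro hvb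
    obtain ⟨hvd, hrk⟩ := mem_bot.1 hvb
    have hvC : OrderDual.ofDual v ∈ C := mem_dualF.1 hvd
    have hdual : rk (dualF C) v = C.card + 1 - rk C (OrderDual.ofDual v) :=
      rk_dualF hC hvC
    have h1 : rk C (OrderDual.ofDual v) ≤ C.card := rk_le_card C _
    have h2 : 1 ≤ rk C (OrderDual.ofDual v) := rk_pos hvC
    rw [mem_dualF, Finset.mem_sdiff]
    refine ⟨hvC, fun hb => ?_⟩
    have := (mem_bot.1 hb).2
    omega
  · intro hv
    rw [mem_dualF, Finset.mem_sdiff] at hv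
    obtain ⟨hvC, hnb⟩ := hv
    have hdual : rk (dualF C) v = C.card + 1 - rk C (OrderDual.ofDual v) :=
      rk_dualF hC hvC
    have h1 : rk C (OrderDual.ofDual v) ≤ C.card := rk_le_card C _
    have hgt : ¬ rk C (OrderDual.ofDual v) ≤ C.card - s :=
      fun hc => hnb (mem_bot.2 ⟨hvC, hc⟩)
    exact mem_bot.2 ⟨mem_dualF.2 hvC, by omega⟩

lemma II_dualF {C₁ C₂ : Finset X} (hC₁ : FChain C₁) (hC₂ : FChain C₂)
    (hdisj : Disjoint C₁ C₂) (hcov : ∀ u : X, u ∈ C₁ ∨ u ∈ C₂)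
    {a t : ℕ} (ha : a ≤ C₁.card) (ht : t ≤ C₂.card) :
    II (dualF C₁) (dualF C₂) (C₁.card - a) (C₂.card - t)
      = dualF ((Finset.univ : Finset X) \ II C₁ C₂ a t) := by
  classical
  have h1 : C₁.card - (C₁.card - a) = a := by omega
  have h2 : C₂.card - (C₂.card - t) = t := by omega
  rw [II, bot_dualF hC₁ (by omega), bot_dualF hC₂ (by omega), h1, h2]
  have : (C₁ \ bot C₁ a) ∪ (C₂ \ bot C₂ t) = (Finset.univ : Finset X) \ II C₁ C₂ a t := by
    ext u
    rw [Finset.mem_union, Finset.mem_sdiff, Finset.mem_sdiff, Finset.mem_sdiff, mem_II]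
    constructor
    · rintro (⟨hu, hnb⟩ | ⟨hu, hnb⟩)
      · refine ⟨Finset.mem_univ u, ?_⟩
        rintro (hb | hb)
        · exact hnb hb
        · exact (Finset.disjoint_left.1 hdisj) hu (bot_subset _ _ hb)
      · refine ⟨Finset.mem_univ u, ?_⟩
        rintro (hb | hb)
        · exact (Finset.disjoint_left.1 hdisj) (bot_subset _ _ hb) hu
        · exact hnb hb
    · rintro ⟨-, hnb⟩
      rcases hcov u with hu | hu
      · exact Or.inl ⟨hu, fun hb => hnb (Or.inl hb)⟩
      · exact Or.inr ⟨hu, fun hb => hnb (Or.inr hb)⟩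
  rw [← this]
  unfold dualF
  exact (Finset.map_union _ _).symm

lemma DnS_dualF_compl {I : Finset X} :
    DnS (dualF ((Finset.univ : Finset X) \ I)) ↔ DnS I := by
  classical
  constructor
  · intro h u v huv hv
    by_contra hu
    have h1 : OrderDual.toDual u ∈ dualF ((Finset.univ : Finset X) \ I) :=
      mem_dualF.2 (Finset.mem_sdiff.2 ⟨Finset.mem_univ u, hu⟩)
    have h2 := h (OrderDual.toDual v) (OrderDual.toDual u) huv h1
    rw [mem_dualF, Finset.mem_sdiff] at h2
    exact h2.2 hv
  · intro h u v huv hv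
    rw [mem_dualF, Finset.mem_sdiff] at hv ⊢
    refine ⟨Finset.mem_univ _, ?_⟩
    intro hu
    exact hv.2 (h (OrderDual.ofDual v) (OrderDual.ofDual u) huv hu)

/-- evaluation of the dual-side sequence. -/
lemma g_eval {C₁ C₂ : Finset X} (hC₁ : FChain C₁) (hC₂ : FChain C₂)
    (hdisj : Disjoint C₁ C₂) (hcov : ∀ u : X, u ∈ C₁ ∨ u ∈ C₂)
    {a t : ℕ} (ha : a ≤ C₁.card) (ht : t ≤ C₂.card) :
    hseq (dualF C₁) (dualF C₂) (C₁.card - a) (C₂.card - t)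
      = if DnS (II C₁ C₂ a t) then eS ((Finset.univ : Finset X) \ II C₁ C₂ a t) else 0 := by
  unfold hseq
  rw [II_dualF hC₁ hC₂ hdisj hcov ha ht, card_dualF]
  by_cases hD : DnS (II C₁ C₂ a t)
  · rw [if_pos ⟨DnS_dualF_compl.2 hD, by omega⟩, if_pos hD, eS_dualF]
  · rw [if_neg (fun hc => hD (DnS_dualF_compl.1 hc.1)), if_neg hD]

end Dual
/-! ### Prefix structure of a linear extension -/

section Force

variable {X : Type*} [PartialOrder X] [Fintype X]

lemma toFinset_take_DnS {l : List X} (hl : IsExt (Finset.univ : Finset X) l) (p : ℕ) :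
    DnS ((l.take p).toFinset) := by
  classical
  obtain ⟨hnd, hmem, hpw⟩ := hl
  intro u v huv hv
  rw [List.mem_toFinset, List.mem_take_iff_getElem] at hv
  obtain ⟨k, hk, hkv⟩ := hv
  have hk' := lt_min_iff.1 hk
  have hul : u ∈ l := (hmem u).2 (Finset.mem_univ u)
  obtain ⟨j, hj, hju⟩ := List.mem_iff_getElem.1 hul
  have hjk : j < k := by
    rcases Nat.lt_trichotomy j k with h | h | h
    · exact h
    · exfalso
      subst h
      rw [hju] at hkv
      exact absurd hkv (ne_of_lt huv)
    · exfalso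
      have := (List.pairwise_iff_getElem.1 hpw) k j hk'.2 hj h
      rw [hju, hkv] at this
      exact this huv
  rw [List.mem_toFinset, List.mem_take_iff_getElem]
  exact ⟨j, lt_min_iff.2 ⟨by omega, hj⟩, hju⟩

lemma x_not_mem_take {l : List X} (hnd : l.Nodup) (x : X) :
    x ∉ (l.take (l.idxOf x)).toFinset := by
  classical
  intro hc
  rw [List.mem_toFinset, List.mem_take_iff_getElem] at hc
  obtain ⟨k, hk, hkx⟩ := hc
  have hk' := lt_min_iff.1 hk
  have := List.Nodup.idxOf_getElem hnd k hk'.2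
  rw [hkx] at this
  omega

lemma force {C₁ C₂ : Finset X} (hC₁ : FChain C₁) (hC₂ : FChain C₂)
    (hdisj : Disjoint C₁ C₂) (hcov : ∀ u : X, u ∈ C₁ ∨ u ∈ C₂)
    {x : X} (hx : x ∈ C₁) {l : List X} (hl : IsExt (Finset.univ : Finset X) l) :
    ∃ t' : ℕ, t' ≤ C₂.card ∧ l.idxOf x + 1 = rk C₁ x + t' ∧
      (l.take (l.idxOf x)).toFinset = II C₁ C₂ (rk C₁ x - 1) t' ∧
      DnS (II C₁ C₂ (rk C₁ x - 1) t') ∧ DnS (II C₁ C₂ (rk C₁ x) t') := by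
  classical
  obtain ⟨hnd, hmem, hpw⟩ := hl
  set a := rk C₁ x with ha_def
  set p := l.idxOf x with hp_def
  set T := (l.take p).toFinset with hT_def
  have ha1 : 1 ≤ a := rk_pos hx
  have han : a ≤ C₁.card := rk_le_card C₁ x
  have hxl : x ∈ l := (hmem x).2 (Finset.mem_univ x)
  have hp : p < l.length := List.idxOf_lt_length_iff.2 hxl
  have hgetp : l[p] = x := List.getElem_idxOf hp
  have hDnT : DnS T := toFinset_take_DnS ⟨hnd, hmem, hpw⟩ p
  have hxT : x ∉ T := x_not_mem_take hnd x
  -- the C₁ part of the prefix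
  have hTC1 : T ∩ C₁ = bot C₁ (a - 1) := by
    ext u
    rw [Finset.mem_inter, mem_bot]
    constructor
    · rintro ⟨huT, huC₁⟩
      have hune : u ≠ x := fun hc => hxT (hc ▸ huT)
      have hcomp := hC₁ u huC₁ x hx
      have hulex : u < x := by
        rcases hcomp with h | h
        · exact lt_of_le_of_ne h hune
        · exfalso
          exact hxT (hDnT x u (lt_of_le_of_ne h (Ne.symm hune)) huT)
      have := rk_lt_of_lt hx hulex
      exact ⟨huC₁, by omega⟩
    · rintro ⟨huC₁, hurk⟩
      have hune : u ≠ x := fun hc => by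
        rw [hc] at hurk
        omega
      have hulex : u < x := by
        rcases hC₁ u huC₁ x hx with h | h
        · exact lt_of_le_of_ne h hune
        · exfalso
          have := rk_mono C₁ h
          omega
      have hul : u ∈ l := (hmem u).2 (Finset.mem_univ u)
      have hj : l.idxOf u < l.length := List.idxOf_lt_length_iff.2 hul
      have hgetj : l[l.idxOf u] = u := List.getElem_idxOf hj
      have hjp : l.idxOf u < p := by
        rcases Nat.lt_trichotomy (l.idxOf u) p with h | h | h
        · exact h
        · exfalso
          apply hune
          exact (List.idxOf_inj hul).1 (by rw [← hp_def]; exact h)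
        · exfalso
          have := (List.pairwise_iff_getElem.1 hpw) p (l.idxOf u) hp hj h
          rw [hgetp, hgetj] at this
          exact this hulex
      refine ⟨?_, huC₁⟩
      rw [hT_def, List.mem_toFinset, List.mem_take_iff_getElem]
      exact ⟨l.idxOf u, lt_min_iff.2 ⟨hjp, hj⟩, hgetj⟩
  -- the C₂ part of the prefix
  have hTC2 : T ∩ C₂ = bot C₂ (T ∩ C₂).card := by
    apply chain_downclosed_eq_bot hC₂ (Finset.inter_subset_right)
    intro u huC₂ v hv hle
    rw [Finset.mem_inter] at hv ⊢
    rcases eq_or_lt_of_le hle with rfl | hlt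
    · exact hv
    · exact ⟨hDnT u v hlt hv.1, huC₂⟩
  set t' := (T ∩ C₂).card with ht'_def
  have ht'n : t' ≤ C₂.card := Finset.card_le_card (Finset.inter_subset_right)
  have hTunion : T = (T ∩ C₁) ∪ (T ∩ C₂) := by
    ext u
    rw [Finset.mem_union, Finset.mem_inter, Finset.mem_inter]
    constructor
    · intro hu
      rcases hcov u with h | h
      · exact Or.inl ⟨hu, h⟩
      · exact Or.inr ⟨hu, h⟩
    · rintro (⟨hu, -⟩ | ⟨hu, -⟩) <;> exact hu
  have hTII : T = II C₁ C₂ (a - 1) t' := by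
    rw [hTunion, hTC1, hTC2]
    rfl
  -- cardinality: p = (a - 1) + t'
  have hTcard : T.card = p := by
    rw [hT_def, List.toFinset_card_of_nodup (hnd.sublist (List.take_sublist p l)),
      List.length_take]
    omega
  have hpcard : p = (a - 1) + t' := by
    have hdisj' : Disjoint (bot C₁ (a - 1)) (bot C₂ t') :=
      Finset.disjoint_of_subset_left (bot_subset C₁ (a - 1))
        (Finset.disjoint_of_subset_right (bot_subset C₂ t') hdisj)
    have := II_card hC₁ hC₂ hdisj (s := a - 1) (t := t') (by omega) ht'n
    rw [← hTII] at this
    omega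
  -- the prefix of length p+1
  have htake1 : (l.take (p + 1)).toFinset = insert x T := by
    rw [List.take_succ, List.getElem?_eq_getElem hp, hgetp]
    show (l.take p ++ [x]).toFinset = insert x T
    rw [List.toFinset_append]
    rw [hT_def]
    have : ([x] : List X).toFinset = {x} := rfl
    rw [this, Finset.union_comm, ← Finset.insert_eq]
  have hIIa : II C₁ C₂ a t' = insert x T := by
    obtain ⟨hins, -⟩ := bot_insert_top hC₁ hx
    rw [hTII, II, II]
    rw [← ha_def] at hins
    rw [← hins, Finset.insert_union]
  refine ⟨t', ht'n, by omega, hTII, ?_, ?_⟩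
  · rw [← hTII]; exact hDnT
  · rw [hIIa, ← htake1]
    exact toFinset_take_DnS ⟨hnd, hmem, hpw⟩ (p + 1)

end Force
/-! ### Counting extensions with `x` in a fixed position -/

section Qprod

variable {X : Type*} [PartialOrder X] [Fintype X]

lemma q_prod {C₁ C₂ : Finset X} (hC₁ : FChain C₁) (hC₂ : FChain C₂)
    (hdisj : Disjoint C₁ C₂) (hcov : ∀ u : X, u ∈ C₁ ∨ u ∈ C₂)
    {x : X} (hx : x ∈ C₁) {t : ℕ} (ht : t ≤ C₂.card)
    (hD1 : DnS (II C₁ C₂ (rk C₁ x - 1) t)) (hD2 : DnS (II C₁ C₂ (rk C₁ x) t)) :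
    Nat.card {l : List X // IsExt (Finset.univ : Finset X) l ∧ l.idxOf x + 1 = rk C₁ x + t}
      = eS (II C₁ C₂ (rk C₁ x - 1) t) *
        eS ((Finset.univ : Finset X) \ II C₁ C₂ (rk C₁ x) t) := by
  classical
  set a := rk C₁ x with ha_def
  have ha1 : 1 ≤ a := rk_pos hx
  have han : a ≤ C₁.card := rk_le_card C₁ x
  set J := II C₁ C₂ (a - 1) t with hJ_def
  set K := (Finset.univ : Finset X) \ II C₁ C₂ a t with hK_def
  obtain ⟨hins, hxnb⟩ := bot_insert_top hC₁ hx
  rw [← ha_def] at hins hxnb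
  have hxJ : x ∉ J := by
    rw [hJ_def]
    intro hc
    rcases mem_II.1 hc with h | h
    · exact hxnb h
    · exact (Finset.disjoint_left.1 hdisj) hx (bot_subset _ _ h)
  have hxI : x ∈ II C₁ C₂ a t := by
    rw [II, ← hins]
    exact Finset.mem_union_left _ (Finset.mem_insert_self x _)
  have hJsub : J ⊆ II C₁ C₂ a t :=
    Finset.union_subset_union (bot_mono C₁ (by omega)) (Finset.Subset.refl _)
  have hIJ : II C₁ C₂ a t = insert x J := by
    rw [hJ_def, II, II, ← hins, Finset.insert_union]
  have hJcard : J.card = (a - 1) + t := II_card hC₁ hC₂ hdisj (by omega) ht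
  have hxK : x ∉ K := by
    rw [hK_def]
    intro hc
    exact (Finset.mem_sdiff.1 hc).2 hxI
  -- the bijection
  have key : ∀ (l₁ l₂ : List X), IsExt J l₁ → IsExt K l₂ →
      (IsExt (Finset.univ : Finset X) (l₁ ++ x :: l₂) ∧
        (l₁ ++ x :: l₂).idxOf x + 1 = a + t) := by
    intro l₁ l₂ ⟨hnd1, hmem1, hpw1⟩ ⟨hnd2, hmem2, hpw2⟩
    have hxl₁ : x ∉ l₁ := fun hc => hxJ ((hmem1 x).1 hc)
    have hxl₂ : x ∉ l₂ := fun hc => hxK ((hmem2 x).1 hc)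
    have hl₁J : ∀ z ∈ l₁, z ∈ J := fun z hz => (hmem1 z).1 hz
    have hl₂K : ∀ z ∈ l₂, z ∈ K := fun z hz => (hmem2 z).1 hz
    have hl₁len : l₁.length = (a - 1) + t := by
      have : l₁.toFinset = J := by
        ext z
        rw [List.mem_toFinset]
        exact hmem1 z
      rw [← hJcard, ← this, List.toFinset_card_of_nodup hnd1]
    refine ⟨⟨?_, ?_, ?_⟩, ?_⟩
    · rw [List.nodup_append]
      refine ⟨hnd1, ?_, ?_⟩
      · rw [List.nodup_cons]
        exact ⟨hxl₂, hnd2⟩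
      · intro z hz1 w hz2 hzw
        subst hzw
        rcases List.mem_cons.1 hz2 with rfl | hz2
        · exact hxl₁ hz1
        · have hzJ := hl₁J z hz1
          have hzK := hl₂K z hz2
          exact (Finset.mem_sdiff.1 hzK).2 (hJsub hzJ)
    · intro z
      simp only [List.mem_append, List.mem_cons, Finset.mem_univ, iff_true]
      by_cases hzK : z ∈ K
      · exact Or.inr (Or.inr ((hmem2 z).2 hzK))
      · have hzI : z ∈ II C₁ C₂ a t := by
          by_contra hc
          exact hzK (Finset.mem_sdiff.2 ⟨Finset.mem_univ z, hc⟩)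
        rw [hIJ] at hzI
        rcases Finset.mem_insert.1 hzI with rfl | hzJ
        · exact Or.inr (Or.inl rfl)
        · exact Or.inl ((hmem1 z).2 hzJ)
    · rw [List.pairwise_append]
      refine ⟨hpw1, ?_, ?_⟩
      · rw [List.pairwise_cons]
        refine ⟨?_, hpw2⟩
        intro v hv hlt
        have hvK := hl₂K v hv
        exact (Finset.mem_sdiff.1 hvK).2 (hD2 v x hlt hxI)
      · intro u hu b hb
        have huJ := hl₁J u hu
        rcases List.mem_cons.1 hb with rfl | hb
        · intro hlt
          exact hxJ (hD1 b u hlt huJ)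
        · intro hlt
          have hbK := hl₂K b hb
          exact (Finset.mem_sdiff.1 hbK).2 (hD2 b u hlt (hJsub huJ))
    · rw [List.idxOf_append_of_notMem hxl₁, List.idxOf_cons_self, Nat.add_zero, hl₁len]
      omega
  unfold eS
  rw [← Nat.card_prod]
  symm
  apply Nat.card_eq_of_bijective
    (fun p : {l : List X // IsExt J l} × {l : List X // IsExt K l} =>
      (⟨p.1.1 ++ x :: p.2.1, key p.1.1 p.2.1 p.1.2 p.2.2⟩ :
        {l : List X // IsExt (Finset.univ : Finset X) l ∧ l.idxOf x + 1 = a + t}))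
  constructor
  · rintro ⟨⟨l₁, hl₁⟩, ⟨l₂, hl₂⟩⟩ ⟨⟨m₁, hm₁⟩, ⟨m₂, hm₂⟩⟩ h
    have h' := congrArg Subtype.val h
    simp only at h'
    have hlen : l₁.length = m₁.length := by
      have hlen1 : l₁.length = (a - 1) + t := by
        have : l₁.toFinset = J := by
          ext z; rw [List.mem_toFinset]; exact hl₁.2.1 z
        rw [← hJcard, ← this, List.toFinset_card_of_nodup hl₁.1]
      have hlen2 : m₁.length = (a - 1) + t := by
        have : m₁.toFinset = J := by
          ext z; rw [List.mem_toFinset]; exact hm₁.2.1 z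
        rw [← hJcard, ← this, List.toFinset_card_of_nodup hm₁.1]
      rw [hlen1, hlen2]
    obtain ⟨h1, h2⟩ := List.append_inj h' hlen
    have h3 : l₂ = m₂ := by injection h2
    simp only [Prod.mk.injEq, Subtype.mk.injEq]
    exact ⟨h1, h3⟩
  · rintro ⟨l, hl, hidx⟩
    obtain ⟨t'', ht''n, hidx'', hTII, hD1'', hD2''⟩ := force hC₁ hC₂ hdisj hcov hx hl
    have htt : t'' = t := by omega
    rw [htt] at ht''n hidx'' hTII hD1'' hD2''
    obtain ⟨hnd, hmem, hpw⟩ := hl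
    set p := l.idxOf x with hp_def
    have hxl : x ∈ l := (hmem x).2 (Finset.mem_univ x)
    have hp : p < l.length := List.idxOf_lt_length_iff.2 hxl
    have hgetp : l[p] = x := List.getElem_idxOf hp
    have hsplit : l = l.take p ++ x :: l.drop (p + 1) := by
      conv_lhs => rw [← List.take_append_drop p l]
      congr 1
      rw [List.drop_eq_getElem_cons hp, hgetp]
    have htake1 : (l.take (p + 1)).toFinset = II C₁ C₂ a t := by
      rw [List.take_succ, List.getElem?_eq_getElem hp, hgetp]
      show (l.take p ++ [x]).toFinset = II C₁ C₂ a t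
      rw [List.toFinset_append, hTII, hIJ]
      have : ([x] : List X).toFinset = {x} := rfl
      rw [this, Finset.union_comm, ← Finset.insert_eq]
    have hl₁ : IsExt J (l.take p) := by
      refine ⟨hnd.sublist (List.take_sublist p l), ?_,
        hpw.sublist (List.take_sublist p l)⟩
      intro z
      rw [← List.mem_toFinset, hTII, hJ_def]
    have hl₂ : IsExt K (l.drop (p + 1)) := by
      refine ⟨hnd.sublist (List.drop_sublist (p + 1) l), ?_,
        hpw.sublist (List.drop_sublist (p + 1) l)⟩
      intro z
      constructor
      · intro hz
        rw [hK_def, Finset.mem_sdiff]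
        refine ⟨Finset.mem_univ z, fun hc => ?_⟩
        rw [← htake1, List.mem_toFinset] at hc
        have hnd' := hnd
        rw [← List.take_append_drop (p + 1) l, List.nodup_append] at hnd'
        exact hnd'.2.2 z hc z hz rfl
      · intro hz
        rw [hK_def, Finset.mem_sdiff] at hz
        have hzl : z ∈ l := (hmem z).2 (Finset.mem_univ z)
        rw [← List.take_append_drop (p + 1) l, List.mem_append] at hzl
        rcases hzl with hzl | hzl
        · exfalso
          rw [← List.mem_toFinset, htake1] at hzl
          exact hz.2 hzl
        · exact hzl
    refine ⟨⟨⟨l.take p, hl₁⟩, ⟨l.drop (p + 1), hl₂⟩⟩, ?_⟩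
    apply Subtype.ext
    simp only
    exact hsplit.symm

end Qprod
/-! ### The position-count sequence `Qa` -/

section Qa

variable {X : Type*} [PartialOrder X] [Fintype X]

noncomputable def Qa (C₁ C₂ : Finset X) (x : X) (i : ℕ) : ℕ :=
  if rk C₁ x ≤ i ∧ i ≤ rk C₁ x + C₂.card then
    hseq C₁ C₂ (rk C₁ x - 1) (i - rk C₁ x) *
      hseq (dualF C₁) (dualF C₂) (C₁.card - rk C₁ x) (C₂.card - (i - rk C₁ x))
  else 0

lemma q_eq_t {C₁ C₂ : Finset X} (hC₁ : FChain C₁) (hC₂ : FChain C₂)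
    (hdisj : Disjoint C₁ C₂) (hcov : ∀ u : X, u ∈ C₁ ∨ u ∈ C₂)
    {x : X} (hx : x ∈ C₁) {t : ℕ} (ht : t ≤ C₂.card) :
    Nat.card {l : List X // IsExt (Finset.univ : Finset X) l ∧ l.idxOf x + 1 = rk C₁ x + t}
      = hseq C₁ C₂ (rk C₁ x - 1) t *
        hseq (dualF C₁) (dualF C₂) (C₁.card - rk C₁ x) (C₂.card - t) := by
  classical
  have ha1 : 1 ≤ rk C₁ x := rk_pos hx
  have han : rk C₁ x ≤ C₁.card := rk_le_card C₁ x
  rw [g_eval hC₁ hC₂ hdisj hcov han ht]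
  by_cases hD1 : DnS (II C₁ C₂ (rk C₁ x - 1) t)
  · by_cases hD2 : DnS (II C₁ C₂ (rk C₁ x) t)
    · rw [q_prod hC₁ hC₂ hdisj hcov hx ht hD1 hD2, if_pos hD2]
      unfold hseq
      rw [if_pos ⟨hD1, ht⟩]
    · rw [if_neg hD2, Nat.mul_zero]
      have : IsEmpty {l : List X // IsExt (Finset.univ : Finset X) l ∧
          l.idxOf x + 1 = rk C₁ x + t} := by
        constructor
        rintro ⟨l, hl, hidx⟩
        obtain ⟨t'', ht''n, hidx'', -, -, hD2''⟩ := force hC₁ hC₂ hdisj hcov hx hl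
        have : t'' = t := by omega
        rw [this] at hD2''
        exact hD2 hD2''
      exact Nat.card_of_isEmpty
  · have hh : hseq C₁ C₂ (rk C₁ x - 1) t = 0 := by
      unfold hseq
      rw [if_neg (fun hc => hD1 hc.1)]
    rw [hh, Nat.zero_mul]
    have : IsEmpty {l : List X // IsExt (Finset.univ : Finset X) l ∧
        l.idxOf x + 1 = rk C₁ x + t} := by
      constructor
      rintro ⟨l, hl, hidx⟩
      obtain ⟨t'', ht''n, hidx'', -, hD1'', -⟩ := force hC₁ hC₂ hdisj hcov hx hl
      have : t'' = t := by omega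
      rw [this] at hD1''
      exact hD1 hD1''
    exact Nat.card_of_isEmpty

lemma q_eq_Qa {C₁ C₂ : Finset X} (hC₁ : FChain C₁) (hC₂ : FChain C₂)
    (hdisj : Disjoint C₁ C₂) (hcov : ∀ u : X, u ∈ C₁ ∨ u ∈ C₂)
    {x : X} (hx : x ∈ C₁) (i : ℕ) :
    Nat.card {l : List X // IsExt (Finset.univ : Finset X) l ∧ l.idxOf x + 1 = i}
      = Qa C₁ C₂ x i := by
  classical
  unfold Qa
  by_cases hrange : rk C₁ x ≤ i ∧ i ≤ rk C₁ x + C₂.card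
  · rw [if_pos hrange]
    have h1 : i = rk C₁ x + (i - rk C₁ x) := by omega
    conv_lhs => rw [h1]
    exact q_eq_t hC₁ hC₂ hdisj hcov hx (by omega)
  · rw [if_neg hrange]
    have : IsEmpty {l : List X // IsExt (Finset.univ : Finset X) l ∧ l.idxOf x + 1 = i} := by
      constructor
      rintro ⟨l, hl, hidx⟩
      obtain ⟨t'', ht''n, hidx'', -, -, -⟩ := force hC₁ hC₂ hdisj hcov hx hl
      exact hrange (by omega)
    exact Nat.card_of_isEmpty

lemma Qa_logconc {C₁ C₂ : Finset X} (hC₁ : FChain C₁) (hC₂ : FChain C₂)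
    (hdisj : Disjoint C₁ C₂) (hcov : ∀ u : X, u ∈ C₁ ∨ u ∈ C₂)
    {x : X} (hx : x ∈ C₁) (i : ℕ) (hi : 1 ≤ i) :
    Qa C₁ C₂ x (i - 1) * Qa C₁ C₂ x (i + 1) ≤ Qa C₁ C₂ x i * Qa C₁ C₂ x i := by
  classical
  set a := rk C₁ x with ha_def
  set n₂ := C₂.card with hn₂_def
  have ha1 : 1 ≤ a := rk_pos hx
  have han : a ≤ C₁.card := rk_le_card C₁ x
  by_cases h1 : i ≤ a
  · have : Qa C₁ C₂ x (i - 1) = 0 := by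
      unfold Qa
      rw [if_neg (fun hc => by omega)]
    rw [this, Nat.zero_mul]
    exact Nat.zero_le _
  by_cases h2 : a + n₂ ≤ i
  · have : Qa C₁ C₂ x (i + 1) = 0 := by
      unfold Qa
      rw [if_neg (fun hc => by omega)]
    rw [this, Nat.mul_zero]
    exact Nat.zero_le _
  -- interior case
  have hLCh : LogConc (hseq C₁ C₂ (a - 1)) :=
    (hseq_LC_IS hC₁ hC₂ hdisj (a - 1) (by omega)).1
  have hLCg : LogConc (hseq (dualF C₁) (dualF C₂) (C₁.card - a)) :=
    (hseq_LC_IS (fchain_dualF hC₁) (fchain_dualF hC₂) (disjoint_dualF hdisj)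
      (C₁.card - a) (by rw [card_dualF]; omega)).1
  set h := hseq C₁ C₂ (a - 1) with hh_def
  set g := hseq (dualF C₁) (dualF C₂) (C₁.card - a) with hg_def
  set t₀ := i - a - 1 with ht₀_def
  set g₀ := n₂ - (i - a) - 1 with hg₀_def
  have e1 : i - 1 - a = t₀ := by omega
  have e2 : i - a = t₀ + 1 := by omega
  have e3 : i + 1 - a = t₀ + 2 := by omega
  have f1 : C₂.card - t₀ = g₀ + 2 := by omega
  have f2 : C₂.card - (t₀ + 1) = g₀ + 1 := by omega
  have f3 : C₂.card - (t₀ + 2) = g₀ := by omega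
  have q1 : Qa C₁ C₂ x (i - 1) = h t₀ * g (g₀ + 2) := by
    unfold Qa
    rw [if_pos (by omega : a ≤ i - 1 ∧ i - 1 ≤ a + n₂), ← hh_def, ← hg_def, e1, f1]
  have q2 : Qa C₁ C₂ x i = h (t₀ + 1) * g (g₀ + 1) := by
    unfold Qa
    rw [if_pos (by omega : a ≤ i ∧ i ≤ a + n₂), ← hh_def, ← hg_def, e2, f2]
  have q3 : Qa C₁ C₂ x (i + 1) = h (t₀ + 2) * g g₀ := by
    unfold Qa
    rw [if_pos (by omega : a ≤ i + 1 ∧ i + 1 ≤ a + n₂), ← hh_def, ← hg_def, e3, f3]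
  rw [q1, q2, q3]
  calc h t₀ * g (g₀ + 2) * (h (t₀ + 2) * g g₀)
      = (h t₀ * h (t₀ + 2)) * (g g₀ * g (g₀ + 2)) := by ring
    _ ≤ (h (t₀ + 1) * h (t₀ + 1)) * (g (g₀ + 1) * g (g₀ + 1)) :=
        Nat.mul_le_mul (hLCh t₀) (hLCg g₀)
    _ = h (t₀ + 1) * g (g₀ + 1) * (h (t₀ + 1) * g (g₀ + 1)) := by ring

end Qa
/-! ### `qvec` and the final theorem -/

/-- The number of linear extensions `L` of the finite poset `X` (bijections onto
`{1,…,n}` preserving the strict order) with `L(x) = i` (values taken 1-based). -/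
noncomputable def qvec {X : Type*} [Fintype X] [PartialOrder X] (x : X) (i : ℕ) : ℕ :=
  Nat.card {L : X ≃ Fin (Fintype.card X) //
    (∀ u v : X, u < v → L u < L v) ∧ (L x : ℕ) + 1 = i}

section Bridge

variable {X : Type*} [PartialOrder X] [Fintype X]

lemma qvec_eq (x : X) (i : ℕ) :
    qvec x i = Nat.card {l : List X // IsExt (Finset.univ : Finset X) l ∧
      l.idxOf x + 1 = i} := by
  classical
  have key : ∀ (L : X ≃ Fin (Fintype.card X)), (∀ u v : X, u < v → L u < L v) →
      ((L x : ℕ) + 1 = i) →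
      (IsExt (Finset.univ : Finset X) (List.ofFn (fun k => L.symm k)) ∧
        (List.ofFn (fun k => L.symm k)).idxOf x + 1 = i) := by
    intro L hmono hpos
    set l := List.ofFn (fun k => L.symm k) with hl_def
    have hlen : l.length = Fintype.card X := List.length_ofFn
    have hnd : l.Nodup := List.nodup_ofFn.2 L.symm.injective
    have hget : ∀ (j : ℕ) (hj : j < l.length), l[j] = L.symm ⟨j, by omega⟩ := by
      intro j hj
      exact List.getElem_ofFn hj
    have hext : IsExt (Finset.univ : Finset X) l := by
      refine ⟨hnd, ?_, ?_⟩
      · intro z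
        simp only [Finset.mem_univ, iff_true, hl_def]
        rw [List.mem_ofFn]
        exact ⟨L z, by simp⟩
      · rw [List.pairwise_iff_getElem]
        intro p q hp hq hpq hlt
        have h1 := hget p hp
        have h2 := hget q hq
        rw [h1, h2] at hlt
        have := hmono _ _ hlt
        simp only [Equiv.apply_symm_apply] at this
        have : q < p := this
        omega
    have hidx : l.idxOf x = (L x : ℕ) := by
      have hLx : (L x : ℕ) < l.length := by
        rw [hlen]; exact (L x).isLt
      have : l[(L x : ℕ)] = x := by
        rw [hget _ hLx]
        have : (⟨(L x : ℕ), by omega⟩ : Fin (Fintype.card X)) = L x := by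
          apply Fin.ext; rfl
        rw [this, Equiv.symm_apply_apply]
      have h2 := List.Nodup.idxOf_getElem hnd _ hLx
      rw [this] at h2
      exact h2
    exact ⟨hext, by rw [hidx]; exact hpos⟩
  apply Nat.card_eq_of_bijective
    (fun p : {L : X ≃ Fin (Fintype.card X) //
        (∀ u v : X, u < v → L u < L v) ∧ (L x : ℕ) + 1 = i} =>
      (⟨List.ofFn (fun k => p.1.symm k), key p.1 p.2.1 p.2.2⟩ :
        {l : List X // IsExt (Finset.univ : Finset X) l ∧ l.idxOf x + 1 = i}))
  constructor
  · rintro ⟨L₁, h₁⟩ ⟨L₂, h₂⟩ h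
    have h' := congrArg Subtype.val h
    simp only at h'
    have hfun := List.ofFn_injective h'
    apply Subtype.ext
    have : L₁.symm = L₂.symm := Equiv.ext (fun k => congrFun hfun k)
    have := congrArg Equiv.symm this
    simpa using this
  · rintro ⟨l, ⟨hnd, hmem, hpw⟩, hidx⟩
    have hlenl : l.length = Fintype.card X := by
      have htf : l.toFinset = Finset.univ := by
        ext z
        simp [List.mem_toFinset, hmem z]
      have := List.toFinset_card_of_nodup hnd
      rw [htf] at this
      rw [← this, Finset.card_univ]
    have hmem' : ∀ z : X, z ∈ l := fun z => (hmem z).2 (Finset.mem_univ z)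
    have hidxlt : ∀ z : X, l.idxOf z < Fintype.card X := by
      intro z
      rw [← hlenl]
      exact List.idxOf_lt_length_iff.2 (hmem' z)
    set L : X ≃ Fin (Fintype.card X) :=
      { toFun := fun z => ⟨l.idxOf z, hidxlt z⟩
        invFun := fun k => l[(k : ℕ)]'(by rw [hlenl]; exact k.isLt)
        left_inv := fun z => List.getElem_idxOf (by rw [hlenl]; exact (hidxlt z))
        right_inv := fun k => by
          apply Fin.ext
          exact List.Nodup.idxOf_getElem hnd _ _ } with hL_def
    have hmono : ∀ u v : X, u < v → L u < L v := by
      intro u v huv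
      show (⟨l.idxOf u, _⟩ : Fin _) < ⟨l.idxOf v, _⟩
      rw [Fin.mk_lt_mk]
      have hju : l[l.idxOf u]'(by rw [hlenl]; exact hidxlt u) = u :=
        List.getElem_idxOf _
      have hjv : l[l.idxOf v]'(by rw [hlenl]; exact hidxlt v) = v :=
        List.getElem_idxOf _
      rcases Nat.lt_trichotomy (l.idxOf u) (l.idxOf v) with h | h | h
      · exact h
      · exfalso
        have : u = v := (List.idxOf_inj (hmem' u)).1 h
        exact absurd this (ne_of_lt huv)
      · exfalso
        have := (List.pairwise_iff_getElem.1 hpw) _ _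
          (by rw [hlenl]; exact hidxlt v) (by rw [hlenl]; exact hidxlt u) h
        rw [hju, hjv] at this
        exact this huv
    refine ⟨⟨L, hmono, ?_⟩, ?_⟩
    · show l.idxOf x + 1 = i
      exact hidx
    · apply Subtype.ext
      simp only
      apply List.ext_getElem
      · rw [List.length_ofFn, hlenl]
      · intro j h1 h2
        rw [List.getElem_ofFn]
        show l[(j : ℕ)]'_ = l[j]'h2
        rfl

end Bridge

/-! ### Dilworth for width two -/

section Dilworth

variable {X : Type*} [PartialOrder X]

lemma galvin_attach {S' : Finset X} {C₁ C₂ : Finset X}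
    (hC₁ : FChain C₁) (hC₂ : FChain C₂) (hdisj : Disjoint C₁ C₂)
    (hcov : C₁ ∪ C₂ = S') {m : X} (hm : m ∉ S') (hmax : ∀ u ∈ S', ¬ m < u)
    {a₁ : X} (ha₁ : a₁ ∈ C₁) (hle : a₁ ≤ m)
    (hkey : ∀ u ∈ C₁, ¬ u ≤ a₁ → ∀ w ∈ S', u ≠ w → (u ≤ w ∨ w ≤ u)) :
    ∃ D₁ D₂ : Finset X, FChain D₁ ∧ FChain D₂ ∧ Disjoint D₁ D₂ ∧
      D₁ ∪ D₂ = insert m S' := by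
  classical
  have hC₁S : C₁ ⊆ S' := hcov ▸ Finset.subset_union_left
  have hC₂S : C₂ ⊆ S' := hcov ▸ Finset.subset_union_right
  refine ⟨insert m (C₁.filter (fun u => u ≤ a₁)),
    C₂ ∪ C₁.filter (fun u => ¬ u ≤ a₁), ?_, ?_, ?_, ?_⟩
  · intro u hu v hv
    rcases Finset.mem_insert.1 hu with hum | hu
    · rcases Finset.mem_insert.1 hv with hvm | hv
      · exact Or.inl (by rw [hum, hvm])
      · exact Or.inr (by rw [hum]; exact le_trans (Finset.mem_filter.1 hv).2 hle)
    · rcases Finset.mem_insert.1 hv with hvm | hv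
      · exact Or.inl (by rw [hvm]; exact le_trans (Finset.mem_filter.1 hu).2 hle)
      · exact hC₁ u (Finset.mem_filter.1 hu).1 v (Finset.mem_filter.1 hv).1
  · intro u hu v hv
    rcases Finset.mem_union.1 hu with hu | hu
    · rcases Finset.mem_union.1 hv with hv | hv
      · exact hC₂ u hu v hv
      · by_cases huv : v = u
        · exact Or.inl (le_of_eq huv.symm)
        · rcases hkey v (Finset.mem_filter.1 hv).1 (Finset.mem_filter.1 hv).2
            u (hC₂S hu) huv with h | h
          · exact Or.inr h
          · exact Or.inl h
    · rcases Finset.mem_union.1 hv with hv | hv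
      · by_cases huv : u = v
        · exact Or.inl (le_of_eq huv)
        · exact hkey u (Finset.mem_filter.1 hu).1 (Finset.mem_filter.1 hu).2
            v (hC₂S hv) huv
      · exact hC₁ u (Finset.mem_filter.1 hu).1 v (Finset.mem_filter.1 hv).1
  · rw [Finset.disjoint_left]
    intro u hu hv
    rcases Finset.mem_insert.1 hu with rfl | hu
    · rcases Finset.mem_union.1 hv with hv | hv
      · exact hm (hC₂S hv)
      · exact hm (hC₁S (Finset.mem_filter.1 hv).1)
    · obtain ⟨huC₁, hule⟩ := Finset.mem_filter.1 hu
      rcases Finset.mem_union.1 hv with hv | hv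
      · exact (Finset.disjoint_left.1 hdisj) huC₁ hv
      · exact (Finset.mem_filter.1 hv).2 hule
  · ext z
    rw [Finset.mem_union, Finset.mem_insert, Finset.mem_insert, Finset.mem_union]
    constructor
    · rintro ((rfl | hz) | hz | hz)
      · exact Or.inl rfl
      · exact Or.inr (hC₁S (Finset.mem_filter.1 hz).1)
      · exact Or.inr (hC₂S hz)
      · exact Or.inr (hC₁S (Finset.mem_filter.1 hz).1)
    · rintro (rfl | hz)
      · exact Or.inl (Or.inl rfl)
      · have : z ∈ C₁ ∪ C₂ := hcov ▸ hz
        rcases Finset.mem_union.1 this with hz1 | hz2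
        · by_cases hza : z ≤ a₁
          · exact Or.inl (Or.inr (Finset.mem_filter.2 ⟨hz1, hza⟩))
          · exact Or.inr (Or.inr (Finset.mem_filter.2 ⟨hz1, hza⟩))
        · exact Or.inr (Or.inl hz2)

lemma dilworth2 {X : Type*} [PartialOrder X] [Fintype X]
    (hwidth : ∀ s : Finset X, IsAntichain (· ≤ ·) (s : Set X) → s.card ≤ 2) :
    ∃ C₁ C₂ : Finset X, FChain C₁ ∧ FChain C₂ ∧ Disjoint C₁ C₂ ∧
      ∀ u : X, u ∈ C₁ ∨ u ∈ C₂ := by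
  classical
  suffices h : ∀ (n : ℕ) (S : Finset X), S.card ≤ n →
      ∃ C₁ C₂ : Finset X, FChain C₁ ∧ FChain C₂ ∧ Disjoint C₁ C₂ ∧ C₁ ∪ C₂ = S by
    obtain ⟨C₁, C₂, h1, h2, h3, h4⟩ := h Finset.univ.card Finset.univ (le_refl _)
    exact ⟨C₁, C₂, h1, h2, h3, fun u =>
      Finset.mem_union.1 (h4 ▸ Finset.mem_univ u)⟩
  intro n
  induction n with
  | zero =>
      intro S hS
      have : S = ∅ := Finset.card_eq_zero.1 (by omega)
      subst this
      exact ⟨∅, ∅, fun u hu => absurd hu (Finset.notMem_empty u),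
        fun u hu => absurd hu (Finset.notMem_empty u), Finset.disjoint_empty_left ∅,
        Finset.union_empty ∅⟩
  | succ n ih =>
      intro S hS
      rcases S.eq_empty_or_nonempty with rfl | hne
      · exact ⟨∅, ∅, fun u hu => absurd hu (Finset.notMem_empty u),
          fun u hu => absurd hu (Finset.notMem_empty u), Finset.disjoint_empty_left ∅,
          Finset.union_empty ∅⟩
      obtain ⟨m, hm, hmax⟩ := exists_maximal_old S hne
      set S' := S.erase m with hS'_def
      obtain ⟨C₁, C₂, hC₁, hC₂, hdisj, hcov⟩ :=
        ih S' (by rw [hS'_def, Finset.card_erase_of_mem hm]; omega)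
      have hmS' : m ∉ S' := Finset.notMem_erase m S
      have hmaxS' : ∀ u ∈ S', ¬ m < u := fun u hu => hmax u (Finset.mem_of_mem_erase hu)
      have hSins : insert m S' = S := Finset.insert_erase hm
      by_cases hA : ∃ u ∈ S', ∃ w ∈ S', ¬ u ≤ w ∧ ¬ w ≤ u
      · -- there is a 2-antichain in S'
        set A := S'.filter (fun u => ∃ w ∈ S', ¬ u ≤ w ∧ ¬ w ≤ u) with hA_def
        have hwitness : ∀ u ∈ A, ∃ w, w ∈ A ∧ ¬ u ≤ w ∧ ¬ w ≤ u := by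
          intro u hu
          obtain ⟨huS, w, hwS, h1, h2⟩ := Finset.mem_filter.1 hu
          exact ⟨w, Finset.mem_filter.2 ⟨hwS, u, huS, h2, h1⟩, h1, h2⟩
        have hAsub : A ⊆ S' := Finset.filter_subset _ _
        -- both chains meet A
        have hmeet : (A ∩ C₁).Nonempty ∧ (A ∩ C₂).Nonempty := by
          obtain ⟨u, huS, w, hwS, h1, h2⟩ := hA
          have huA : u ∈ A := Finset.mem_filter.2 ⟨huS, w, hwS, h1, h2⟩
          have hwA : w ∈ A := Finset.mem_filter.2 ⟨hwS, u, huS, h2, h1⟩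
          have hucov : u ∈ C₁ ∪ C₂ := hcov ▸ huS
          have hwcov : w ∈ C₁ ∪ C₂ := hcov ▸ hwS
          rcases Finset.mem_union.1 hucov with hu1 | hu2
          · have hw2 : w ∈ C₂ := by
              rcases Finset.mem_union.1 hwcov with hw1 | hw2
              · exfalso
                rcases hC₁ u hu1 w hw1 with h | h
                · exact h1 h
                · exact h2 h
              · exact hw2
            exact ⟨⟨u, Finset.mem_inter.2 ⟨huA, hu1⟩⟩, ⟨w, Finset.mem_inter.2 ⟨hwA, hw2⟩⟩⟩
          · have hw1 : w ∈ C₁ := by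
              rcases Finset.mem_union.1 hwcov with hw1 | hw2
              · exact hw1
              · exfalso
                rcases hC₂ u hu2 w hw2 with h | h
                · exact h1 h
                · exact h2 h
            exact ⟨⟨w, Finset.mem_inter.2 ⟨hwA, hw1⟩⟩, ⟨u, Finset.mem_inter.2 ⟨huA, hu2⟩⟩⟩
        obtain ⟨a₁, ha₁mem, ha₁gr⟩ :=
          chain_exists_greatest (fchain_subset hC₁ Finset.inter_subset_right) hmeet.1
        obtain ⟨a₂, ha₂mem, ha₂gr⟩ :=
          chain_exists_greatest (fchain_subset hC₂ Finset.inter_subset_right) hmeet.2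
        have ha₁A : a₁ ∈ A := (Finset.mem_inter.1 ha₁mem).1
        have ha₂A : a₂ ∈ A := (Finset.mem_inter.1 ha₂mem).1
        have ha₁C : a₁ ∈ C₁ := (Finset.mem_inter.1 ha₁mem).2
        have ha₂C : a₂ ∈ C₂ := (Finset.mem_inter.1 ha₂mem).2
        -- a₁ and a₂ are incomparable
        have hinc : ¬ a₁ ≤ a₂ ∧ ¬ a₂ ≤ a₁ := by
          constructor
          · intro hc
            obtain ⟨w, hwA, h1, h2⟩ := hwitness a₂ ha₂A
            have hwC₁ : w ∈ C₁ := by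
              have : w ∈ C₁ ∪ C₂ := hcov ▸ hAsub hwA
              rcases Finset.mem_union.1 this with h | h
              · exact h
              · exfalso
                rcases hC₂ a₂ ha₂C w h with h' | h'
                · exact h1 h'
                · exact h2 h'
            have : w ≤ a₁ := ha₁gr w (Finset.mem_inter.2 ⟨hwA, hwC₁⟩)
            exact h2 (le_trans this hc)
          · intro hc
            obtain ⟨w, hwA, h1, h2⟩ := hwitness a₁ ha₁A
            have hwC₂ : w ∈ C₂ := by
              have : w ∈ C₁ ∪ C₂ := hcov ▸ hAsub hwA
              rcases Finset.mem_union.1 this with h | h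
              · exfalso
                rcases hC₁ a₁ ha₁C w h with h' | h'
                · exact h1 h'
                · exact h2 h'
              · exact h
            have : w ≤ a₂ := ha₂gr w (Finset.mem_inter.2 ⟨hwA, hwC₂⟩)
            exact h2 (le_trans this hc)
        -- m is comparable with a₁ or a₂
        have hcomp : (a₁ ≤ m ∨ m ≤ a₁) ∨ (a₂ ≤ m ∨ m ≤ a₂) := by
          by_contra hc
          push_neg at hc
          obtain ⟨⟨h1, h2⟩, h3, h4⟩ := hc
          have hma₁ : m ≠ a₁ := fun h => hmS' (h ▸ hAsub ha₁A)
          have hma₂ : m ≠ a₂ := fun h => hmS' (h ▸ hAsub ha₂A)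
          have ha₁a₂ : a₁ ≠ a₂ := fun h => hinc.1 (le_of_eq h)
          have hanti : IsAntichain (· ≤ ·) (↑({m, a₁, a₂} : Finset X) : Set X) := by
            intro u hu v hv huv
            simp only [Finset.coe_insert, Finset.coe_singleton, Set.mem_insert_iff,
              Set.mem_singleton_iff] at hu hv
            rcases hu with rfl | rfl | rfl <;> rcases hv with rfl | rfl | rfl
            · exact absurd rfl huv
            · exact h2
            · exact h4
            · exact h1
            · exact absurd rfl huv
            · exact hinc.1
            · exact h3
            · exact hinc.2
            · exact absurd rfl huv
          have hcard : ({m, a₁, a₂} : Finset X).card = 3 := by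
            rw [Finset.card_insert_of_notMem (by
              simp only [Finset.mem_insert, Finset.mem_singleton]
              rintro (rfl | rfl)
              · exact hma₁ rfl
              · exact hma₂ rfl),
              Finset.card_insert_of_notMem (by
                simp only [Finset.mem_singleton]
                exact ha₁a₂),
              Finset.card_singleton]
          have := hwidth _ hanti
          omega
        -- the element below m is ≤ m
        have hto_le : ∀ {b : X}, b ∈ S' → (b ≤ m ∨ m ≤ b) → b ≤ m := by
          intro b hb hcmp
          rcases hcmp with h | h
          · exact h
          · exfalso
            rcases eq_or_lt_of_le h with rfl | h'
            · exact hmS' hb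
            · exact hmaxS' b hb h'
        rcases hcomp with hcmp | hcmp
        · have hle : a₁ ≤ m := hto_le (hAsub ha₁A) hcmp
          have hkey : ∀ u ∈ C₁, ¬ u ≤ a₁ → ∀ w ∈ S', u ≠ w → (u ≤ w ∨ w ≤ u) := by
            intro u huC hua w hwS huw
            by_contra hc
            push_neg at hc
            have huA : u ∈ A := Finset.mem_filter.2
              ⟨hcov ▸ Finset.mem_union_left _ huC, w, hwS, hc.1, hc.2⟩
            exact hua (ha₁gr u (Finset.mem_inter.2 ⟨huA, huC⟩))
          obtain ⟨D₁, D₂, h1, h2, h3, h4⟩ :=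
            galvin_attach hC₁ hC₂ hdisj hcov hmS' hmaxS' ha₁C hle hkey
          exact ⟨D₁, D₂, h1, h2, h3, by rw [h4, hSins]⟩
        · have hle : a₂ ≤ m := hto_le (hAsub ha₂A) hcmp
          have hkey : ∀ u ∈ C₂, ¬ u ≤ a₂ → ∀ w ∈ S', u ≠ w → (u ≤ w ∨ w ≤ u) := by
            intro u huC hua w hwS huw
            by_contra hc
            push_neg at hc
            have huA : u ∈ A := Finset.mem_filter.2
              ⟨hcov ▸ Finset.mem_union_right _ huC, w, hwS, hc.1, hc.2⟩
            exact hua (ha₂gr u (Finset.mem_inter.2 ⟨huA, huC⟩))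
          obtain ⟨D₁, D₂, h1, h2, h3, h4⟩ :=
            galvin_attach hC₂ hC₁ hdisj.symm (by rw [Finset.union_comm]; exact hcov)
              hmS' hmaxS' ha₂C hle hkey
          exact ⟨D₁, D₂, h1, h2, h3, by rw [h4, hSins]⟩
      · -- S' is a chain
        push_neg at hA
        have hchain : ∀ u ∈ S', ∀ w ∈ S', u ≤ w ∨ w ≤ u := by
          intro u hu w hw
          by_contra hc
          push_neg at hc
          exact hc.2 (hA u hu w hw hc.1)
        refine ⟨insert m (S'.filter (fun u => u ≤ m ∨ m ≤ u)),
          S'.filter (fun u => ¬(u ≤ m ∨ m ≤ u)), ?_, ?_, ?_, ?_⟩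
        · intro u hu v hv
          rcases Finset.mem_insert.1 hu with rfl | hu
          · rcases Finset.mem_insert.1 hv with rfl | hv
            · exact Or.inl (le_refl _)
            · rcases (Finset.mem_filter.1 hv).2 with h | h
              · exact Or.inr h
              · exact Or.inl h
          · rcases Finset.mem_insert.1 hv with rfl | hv
            · exact (Finset.mem_filter.1 hu).2
            · exact hchain u (Finset.mem_filter.1 hu).1 v (Finset.mem_filter.1 hv).1
        · intro u hu v hv
          exact hchain u (Finset.mem_filter.1 hu).1 v (Finset.mem_filter.1 hv).1
        · rw [Finset.disjoint_left]
          intro u hu hv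
          rcases Finset.mem_insert.1 hu with rfl | hu
          · exact hmS' (Finset.mem_filter.1 hv).1
          · exact (Finset.mem_filter.1 hv).2 (Finset.mem_filter.1 hu).2
        · rw [← hSins]
          ext z
          rw [Finset.mem_union, Finset.mem_insert, Finset.mem_insert]
          constructor
          · rintro ((rfl | hz) | hz)
            · exact Or.inl rfl
            · exact Or.inr (Finset.mem_filter.1 hz).1
            · exact Or.inr (Finset.mem_filter.1 hz).1
          · rintro (rfl | hz)
            · exact Or.inl (Or.inl rfl)
            · by_cases hzc : z ≤ m ∨ m ≤ z
              · exact Or.inl (Or.inr (Finset.mem_filter.2 ⟨hz, hzc⟩))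
              · exact Or.inr (Finset.mem_filter.2 ⟨hz, hzc⟩)

end Dilworth

/-- Stanley's inequality for posets of width two: the sequence
`i ↦ #{linear extensions with L(x) = i}` is log-concave. -/
theorem stanley_width_two {X : Type*} [Fintype X] [PartialOrder X]
    (hwidth : ∀ s : Finset X, IsAntichain (· ≤ ·) (s : Set X) → s.card ≤ 2)
    (x : X) (i : ℕ) (hi : 1 ≤ i) :
    qvec x (i - 1) * qvec x (i + 1) ≤ qvec x i * qvec x i := by
  classical
  obtain ⟨C₁, C₂, hC₁, hC₂, hdisj, hcov⟩ := dilworth2 hwidth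
  have main : ∀ (D₁ D₂ : Finset X), FChain D₁ → FChain D₂ → Disjoint D₁ D₂ →
      (∀ u : X, u ∈ D₁ ∨ u ∈ D₂) → x ∈ D₁ →
      qvec x (i - 1) * qvec x (i + 1) ≤ qvec x i * qvec x i := by
    intro D₁ D₂ h1 h2 h3 h4 hx
    rw [qvec_eq, qvec_eq, qvec_eq, q_eq_Qa h1 h2 h3 h4 hx, q_eq_Qa h1 h2 h3 h4 hx,
      q_eq_Qa h1 h2 h3 h4 hx]
    exact Qa_logconc h1 h2 h3 h4 hx i hi
  rcases hcov x with hx | hx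
  · exact main C₁ C₂ hC₁ hC₂ hdisj hcov hx
  · exact main C₂ C₁ hC₂ hC₁ hdisj.symm (fun u => (hcov u).symm) hx
end

section
/- Let P be a finite poset of width two on n elements and let x ∈ X. The sequence q(i) := #{linear extensions L of P : L(x) = i} has interval support: if q(i) > 0 and q(k) > 0 for some i ≤ j ≤ k, then q(j) > 0. -/
namespace Fin

variable {n : ℕ} {p q : Fin n}

theorem swap_lt_swap_iff_of_val_add_one_eq (h : (p : ℕ) + 1 = q) (r s : Fin n) :
    Equiv.swap p q r < Equiv.swap p q s ↔ (r < s ∧ ¬(r = p ∧ s = q)) ∨ (r = q ∧ s = p) := by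
  simp only [Equiv.swap_apply_def, Fin.lt_def, Fin.ext_iff]
  split_ifs <;> omega

theorem val_swap_le_of_val_add_one_eq (h : (p : ℕ) + 1 = q) (r : Fin n) :
    (Equiv.swap p q r : ℕ) ≤ r + 1 := by
  simp only [Equiv.swap_apply_def, Fin.ext_iff]
  split_ifs <;> omega

end Fin

section AdjacentSwaps

variable {X : Type*} {n : ℕ}

theorem exists_adjacent_inversion_of_ne {L M : X ≃ Fin n} (h : L ≠ M) :
    ∃ a b : X, (L a : ℕ) + 1 = L b ∧ M b < M a := by
  obtain _ | n := n
  · exact absurd (Equiv.ext fun a => (L a).elim0) h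
  by_contra! hmono
  have hσ : StrictMono (L.symm.trans M) := Fin.strictMono_iff_lt_succ.2 fun i =>
    (hmono _ _ (by simp)).lt_of_ne ((L.symm.trans M).injective.ne i.castSucc_lt_succ.ne)
  exact h (Equiv.ext fun a => by simpa using (hσ.apply_eq (x := L a)).symm)

theorem strictMono_trans_swap [Preorder X] {L : X ≃ Fin n} (hL : StrictMono L) {a b : X}
    (hab : (L a : ℕ) + 1 = L b) (hba : ¬a < b) :
    StrictMono (L.trans (Equiv.swap (L a) (L b))) := by
  intro u v huv
  rw [Equiv.trans_apply, Equiv.trans_apply, Fin.swap_lt_swap_iff_of_val_add_one_eq hab]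
  refine .inl ⟨hL huv, fun ⟨hu, hv⟩ => hba ?_⟩
  rwa [L.injective hu, L.injective hv] at huv

def inversionSet [Fintype X] (L M : X ≃ Fin n) : Finset (X × X) :=
  Finset.univ.filter fun uv => L uv.1 < L uv.2 ∧ M uv.2 < M uv.1

theorem inversionSet_trans_swap_ssubset [Fintype X] {L M : X ≃ Fin n} {a b : X}
    (hab : (L a : ℕ) + 1 = L b) (hba : M b < M a) :
    inversionSet (L.trans (Equiv.swap (L a) (L b))) M ⊂ inversionSet L M := by
  have hswap := Fin.swap_lt_swap_iff_of_val_add_one_eq hab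
  refine (Finset.ssubset_iff_of_subset ?_).2 ⟨(a, b), ?_, ?_⟩
  · rintro ⟨u, v⟩
    simp only [inversionSet, Finset.mem_filter, Finset.mem_univ, true_and, Equiv.trans_apply,
      hswap]
    rintro ⟨⟨hlt, -⟩ | ⟨hu, hv⟩, hvu⟩
    · exact ⟨hlt, hvu⟩
    · rw [L.injective hu, L.injective hv] at hvu
      exact absurd hvu hba.asymm
  · simp only [inversionSet, Finset.mem_filter, Finset.mem_univ, true_and, Fin.lt_def]
    exact ⟨by omega, hba⟩
  · simp only [inversionSet, Finset.mem_filter, Finset.mem_univ, true_and, Equiv.trans_apply,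
      Equiv.swap_apply_left, Equiv.swap_apply_right, Fin.lt_def]
    omega

theorem exists_strictMono_equiv_val_eq [Preorder X] [Fintype X] {L M : X ≃ Fin n}
    (hL : StrictMono L) (hM : StrictMono M) (x : X) {j : ℕ} (hLj : (L x : ℕ) ≤ j)
    (hjM : j ≤ M x) : ∃ K : X ≃ Fin n, StrictMono K ∧ (K x : ℕ) = j := by
  induction hN : (inversionSet L M).card using Nat.strong_induction_on generalizing L with
  | _ N ih =>
  obtain hLj | hLj := hLj.eq_or_lt
  · exact ⟨L, hL, hLj⟩
  have hLM : L ≠ M := by rintro rfl; omega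
  obtain ⟨a, b, hab, hba⟩ := exists_adjacent_inversion_of_ne hLM
  refine ih _ (hN ▸ Finset.card_lt_card (inversionSet_trans_swap_ssubset hab hba))
    (strictMono_trans_swap hL hab fun h => (hM h).asymm hba) ?_ rfl
  have := Fin.val_swap_le_of_val_add_one_eq hab (L x)
  simp only [Equiv.trans_apply]
  omega

end AdjacentSwaps

theorem qvec_pos_iff {X : Type*} [Fintype X] [PartialOrder X] {x : X} {i : ℕ} :
    0 < qvec x i ↔ ∃ L : X ≃ Fin (Fintype.card X), StrictMono L ∧ (L x : ℕ) + 1 = i := by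
  simp only [qvec, Nat.card_pos_iff, nonempty_subtype, StrictMono, Subtype.finite, and_true]

theorem qvec_interval_support_general {X : Type*} [Fintype X] [PartialOrder X]
    (x : X) (i j k : ℕ) (hij : i ≤ j) (hjk : j ≤ k)
    (hi : 0 < qvec x i) (hk : 0 < qvec x k) :
    0 < qvec x j := by
  obtain ⟨L, hL, hLx⟩ := qvec_pos_iff.1 hi
  obtain ⟨M, hM, hMx⟩ := qvec_pos_iff.1 hk
  obtain ⟨K, hK, hKx⟩ := exists_strictMono_equiv_val_eq hL hM x (j := j - 1) (by omega) (by omega)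
  exact qvec_pos_iff.2 ⟨K, hK, by omega⟩

/-- For a poset of width two, the sequence `q(i) = #{L : L(x) = i}` has interval
support. -/
theorem qvec_interval_support {X : Type*} [Fintype X] [PartialOrder X]
    (hwidth : ∀ s : Finset X, IsAntichain (· ≤ ·) (s : Set X) → s.card ≤ 2)
    (x : X) (i j k : ℕ) (hij : i ≤ j) (hjk : j ≤ k)
    (hi : 0 < qvec x i) (hk : 0 < qvec x k) :
    0 < qvec x j :=
  qvec_interval_support_general x i j k hij hjk hi hk
end

section
/- Let R be a finite region in the lattice ℤ² that is the set of lattice points weakly between two fixed monotone NE lattice paths from (0,0) to (a,b) (a row- and column-convex staircase region). Let A = (a₁,a₂) and B = (b₁,b₂) be lattice points in R on the same vertical line (a₁ = b₁) with A above B (a₂ ≥ b₂), and let C = (c₁,c₂), D = (d₁,d₂) be lattice points in R on a common vertical line strictly to the right (c₁ = d₁ > a₁) with C above D. Write K(X,Y) for the number of monotone NE lattice paths from X to Y staying inside R. If a₂ - b₂ > c₂ - d₂, then K(A - e₂, C) · K(B + e₂, D) ≥ K(A, C) · K(B, D), where e₂ = (0,1). -/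
/-!
A path from column `x₀` to column `x₀ + m` is determined by the heights `y 0 ≤ ⋯ ≤ y (m - 1)` of
its East steps, and since `R` is column-convex, every monotone sequence between the endpoint
heights whose East steps lie in `R` comes from a path in `R`. So both sides of the inequality are
products of cardinalities of such sets of sequences. Raise the sequences for `(B, D)` by
`k = a₂ - b₂ - 1`: the pointwise minimum of a sequence for `(A, C)` and a raised one for `(B, D)`
is a sequence for `(A - e₂, C)`, and the pointwise maximum is a raised sequence for `(B + e₂, D)`;
the gap condition `c₂ - d₂ ≤ k` is what makes the upper bounds fit. Daykin's inequality
`|S| |T| ≤ |S ⊼ T| |S ⊻ T|` in the distributive lattice `Fin m → ℤ` concludes.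
-/

/-- Number of lattice steps of a monotone NE path from `A` to `B`. -/
def steps (A B : ℤ × ℤ) : ℕ := ((B.1 - A.1) + (B.2 - A.2)).toNat

/-- `p : ℕ → ℤ × ℤ` is a monotone NE lattice path from `A` to `B`:
it starts at `A`, takes unit East or North steps, and is constantly `B` after
`steps A B` steps. -/
def IsNEPath (A B : ℤ × ℤ) (p : ℕ → ℤ × ℤ) : Prop :=
  p 0 = A ∧
  (∀ t, t < steps A B → p (t + 1) = p t + (1, 0) ∨ p (t + 1) = p t + (0, 1)) ∧
  (∀ t, steps A B ≤ t → p t = B)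

/-- The set of lattice points weakly between the two NE lattice paths
`lower` and `upper` (each with `n` steps): a point is in the region iff it lies
weakly above some point of `lower` in its column and weakly below some point of
`upper` in its column. -/
def staircaseRegion (n : ℕ) (lower upper : ℕ → ℤ × ℤ) : Set (ℤ × ℤ) :=
  {v | (∃ t ≤ n, (lower t).1 = v.1 ∧ (lower t).2 ≤ v.2) ∧
       (∃ t ≤ n, (upper t).1 = v.1 ∧ v.2 ≤ (upper t).2)}

/-- The number of monotone NE lattice paths from `A` to `B` staying inside `R`. -/
noncomputable def pathCount (R : Set (ℤ × ℤ)) (A B : ℤ × ℤ) : ℕ :=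
  Nat.card {p : ℕ → ℤ × ℤ // IsNEPath A B p ∧ ∀ t, p t ∈ R}

def IsColumnConvex (R : Set (ℤ × ℤ)) : Prop :=
  ∀ x, (Prod.mk x ⁻¹' R).OrdConnected

lemma IsColumnConvex.mem_of_le_of_le {R : Set (ℤ × ℤ)} (hR : IsColumnConvex R) {x r s t : ℤ}
    (hr : (x, r) ∈ R) (ht : (x, t) ∈ R) (hrs : r ≤ s) (hst : s ≤ t) : (x, s) ∈ R :=
  (hR x).out hr ht ⟨hrs, hst⟩

lemma isColumnConvex_staircaseRegion (n : ℕ) (lower upper : ℕ → ℤ × ℤ) :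
    IsColumnConvex (staircaseRegion n lower upper) := by
  refine fun x => ⟨fun r hr t ht s hs => ?_⟩
  obtain ⟨⟨i, hi, hix, hiy⟩, -⟩ := hr
  obtain ⟨-, j, hj, hjx, hjy⟩ := ht
  exact ⟨⟨i, hi, hix, hiy.trans hs.1⟩, ⟨j, hj, hjx, hs.2.trans hjy⟩⟩

namespace IsNEPath

variable {P Q : ℤ × ℤ} {p : ℕ → ℤ × ℤ}

lemma monotone (hp : IsNEPath P Q p) : Monotone p := by
  refine monotone_nat_of_le_succ fun t => ?_
  rcases lt_or_ge t (steps P Q) with ht | ht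
  · rcases hp.2.1 t ht with h | h <;> rw [h] <;> exact le_add_of_nonneg_right (by decide)
  · rw [hp.2.2 t ht, hp.2.2 (t + 1) (by omega)]

lemma mem_Icc (hp : IsNEPath P Q p) (t : ℕ) : p t ∈ Set.Icc P Q := by
  refine ⟨hp.1 ▸ hp.monotone t.zero_le, ?_⟩
  rcases le_total t (steps P Q) with ht | ht
  · exact hp.2.2 _ le_rfl ▸ hp.monotone ht
  · exact (hp.2.2 t ht).le

lemma le (hp : IsNEPath P Q p) : P ≤ Q :=
  (hp.mem_Icc 0).1.trans (hp.mem_Icc 0).2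

lemma fst_add_snd (hp : IsNEPath P Q p) {t : ℕ} (ht : t ≤ steps P Q) :
    (p t).1 + (p t).2 = P.1 + P.2 + t := by
  induction t with
  | zero => simp [hp.1]
  | succ t ih =>
    rcases hp.2.1 t ht with h | h <;> rw [h] <;> simp <;> linarith [ih (by omega)]

end IsNEPath

lemma pathCount_eq_zero_of_not_le {R : Set (ℤ × ℤ)} {P Q : ℤ × ℤ} (h : ¬ P ≤ Q) :
    pathCount R P Q = 0 :=
  Nat.card_eq_zero.2 (.inl ⟨fun ⟨_, hp, _⟩ => h hp.le⟩)

lemma Fin.mem_iff_lt_card_of_isLowerSet {m : ℕ} {s : Finset (Fin m)}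
    (hs : IsLowerSet (s : Set (Fin m))) (i : Fin m) : i ∈ s ↔ (i : ℕ) < s.card := by
  constructor
  · intro hi
    have := Finset.card_le_card fun j hj => hs (Finset.mem_Iic.1 hj) hi
    rw [Fin.card_Iic] at this
    omega
  · intro hi
    by_contra hns
    have := Finset.card_le_card fun j hj =>
      Finset.mem_Iio.2 (lt_of_not_ge fun hij => hns (hs hij hj))
    rw [Fin.card_Iio] at this
    omega

section EastCount

variable {m : ℕ} {lo : ℤ} {y : Fin m → ℤ} {t c : ℕ}

/-- A path starting at height `lo` whose `i`-th East step is at height `y i` takes that step at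
time `i + y i - lo`; `eastCount lo y t` counts the East steps taken before time `t`. -/
def eastCount (lo : ℤ) (y : Fin m → ℤ) (t : ℕ) : ℕ :=
  (Finset.univ.filter fun i : Fin m => (i : ℤ) + y i - lo < t).card

lemma eastCount_le : eastCount lo y t ≤ m :=
  (Finset.card_filter_le _ _).trans (Finset.card_fin m).le

lemma lt_eastCount_iff (hy : Monotone y) (i : Fin m) :
    (i : ℕ) < eastCount lo y t ↔ (i : ℤ) + y i - lo < t := by
  refine (Fin.mem_iff_lt_card_of_isLowerSet (fun j k hkj hj => ?_) i).symm.trans (by simp)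
  simp only [Finset.coe_filter, Finset.mem_univ, true_and, Set.mem_ofPred_eq] at hj ⊢
  have : (k : ℤ) ≤ j := by exact_mod_cast hkj
  linarith [hy hkj]

lemma eastCount_eq_of_forall_iff (hy : Monotone y) (hc : c ≤ m)
    (h : ∀ i : Fin m, (i : ℤ) + y i - lo < t ↔ (i : ℕ) < c) : eastCount lo y t = c := by
  refine eq_of_forall_lt_iff fun i => ?_
  by_cases hi : i < m
  · exact (lt_eastCount_iff hy ⟨i, hi⟩).trans (h ⟨i, hi⟩)
  · have := eastCount_le (lo := lo) (y := y) (t := t)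
    omega

lemma eastCount_zero (hy : ∀ i, lo ≤ y i) : eastCount lo y 0 = 0 :=
  Finset.card_eq_zero.2 <| Finset.filter_false_of_mem fun i _ => by
    have := hy i
    omega

lemma eastCount_succ (hy : Monotone y) (t : ℕ) :
    eastCount lo y (t + 1) = eastCount lo y t ∨ eastCount lo y (t + 1) = eastCount lo y t + 1 := by
  have hmono : eastCount lo y t ≤ eastCount lo y (t + 1) :=
    Finset.card_le_card (Finset.monotone_filter_right _ fun i _ h => by push_cast; omega)
  by_contra! hne
  set j := eastCount lo y t
  -- otherwise the `j`-th and `(j + 1)`-th East steps would both be taken at time `t`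
  have hj : j + 1 < m := by have := eastCount_le (lo := lo) (y := y) (t := t + 1); omega
  have h₁ := (lt_eastCount_iff hy (lo := lo) (t := t + 1) ⟨j, by omega⟩).1 (by simp; omega)
  have h₂ := (lt_eastCount_iff hy (lo := lo) (t := t + 1) ⟨j + 1, hj⟩).1 (by simp; omega)
  have h₃ := (lt_eastCount_iff hy (lo := lo) (t := t) ⟨j, by omega⟩).not.1 (lt_irrefl j)
  have h₄ : y ⟨j, by omega⟩ ≤ y ⟨j + 1, hj⟩ := hy (Fin.mk_le_mk.2 (by omega))
  push_cast at h₁ h₂ h₃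
  omega

end EastCount

/-- A path from column `x₀` to column `x₀ + m` is recorded by the heights `y i` of its East steps
`(x₀ + i, y i) → (x₀ + i + 1, y i)`. -/
def crossingHeights (R : Set (ℤ × ℤ)) (m : ℕ) (x₀ lo hi : ℤ) : Set (Fin m → ℤ) :=
  {y | Monotone y ∧ ∀ i : Fin m,
    lo ≤ y i ∧ y i ≤ hi ∧ (x₀ + (i : ℕ), y i) ∈ R ∧ (x₀ + (i : ℕ) + 1, y i) ∈ R}

section Decode

variable {R : Set (ℤ × ℤ)} {m : ℕ} {P Q : ℤ × ℤ} {y : Fin m → ℤ}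

def pathOfHeights (P Q : ℤ × ℤ) (y : Fin m → ℤ) (t : ℕ) : ℤ × ℤ :=
  if steps P Q ≤ t then Q else (P.1 + eastCount P.2 y t, P.2 + t - eastCount P.2 y t)

lemma pathOfHeights_of_le (hQ : Q.1 = P.1 + m) (hPQ : P.2 ≤ Q.2) (hy : Monotone y)
    (hyQ : ∀ i, y i ≤ Q.2) {t : ℕ} (ht : t ≤ steps P Q) :
    pathOfHeights P Q y t = (P.1 + eastCount P.2 y t, P.2 + t - eastCount P.2 y t) := by
  rcases ht.lt_or_eq with ht | rfl
  · simp [pathOfHeights, ht.not_ge]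
  have hend : eastCount P.2 y (steps P Q) = m :=
    eastCount_eq_of_forall_iff hy le_rfl fun i => by
      have := hyQ i
      simp only [steps, Fin.is_lt, iff_true]
      omega
  simp only [pathOfHeights, le_refl, if_true, hend]
  ext <;> simp only [steps] <;> omega

lemma isNEPath_pathOfHeights (hQ : Q.1 = P.1 + m) (hPQ : P.2 ≤ Q.2) (hy : Monotone y)
    (hyP : ∀ i, P.2 ≤ y i) (hyQ : ∀ i, y i ≤ Q.2) : IsNEPath P Q (pathOfHeights P Q y) := by
  have hform := @pathOfHeights_of_le m P Q y hQ hPQ hy hyQ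
  refine ⟨?_, fun t ht => ?_, fun t ht => if_pos ht⟩
  · rw [hform (Nat.zero_le _), eastCount_zero hyP]
    simp
  rw [hform ht.le, hform ht]
  rcases eastCount_succ (lo := P.2) hy t with h | h <;> rw [h]
  · right; ext <;> simp; ring
  · left; ext <;> simp <;> ring

lemma pathOfHeights_mem (hR : IsColumnConvex R) (hP : P ∈ R) (hQ : Q ∈ R)
    (hQP : Q.1 = P.1 + m) (hPQ : P.2 ≤ Q.2) (hy : y ∈ crossingHeights R m P.1 P.2 Q.2) (t : ℕ) :
    pathOfHeights P Q y t ∈ R := by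
  obtain ⟨hmono, hyR⟩ := hy
  rcases lt_or_ge t (steps P Q) with ht | ht
  swap
  · simpa [pathOfHeights, ht] using hQ
  rw [pathOfHeights_of_le hQP hPQ hmono (fun i => (hyR i).2.1) ht.le]
  set j := eastCount P.2 y t
  have hjm : j ≤ m := eastCount_le
  -- the point lies in column `P.1 + j`, between the East steps `j - 1` and `j`
  have hbelow : ∃ r, (P.1 + j, r) ∈ R ∧ r ≤ P.2 + t - j := by
    rcases Nat.eq_zero_or_pos j with hj | hj
    · exact ⟨P.2, by simpa [hj] using hP, by omega⟩
    have := (lt_eastCount_iff hmono (lo := P.2) (t := t) ⟨j - 1, by omega⟩).1 (by simp; omega)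
    refine ⟨y ⟨j - 1, by omega⟩, ?_, by simp at this; omega⟩
    convert (hyR ⟨j - 1, by omega⟩).2.2.2 using 2
    simp; omega
  have habove : ∃ s, (P.1 + j, s) ∈ R ∧ P.2 + t - j ≤ s := by
    rcases hjm.lt_or_eq with hj | hj
    · have := (lt_eastCount_iff hmono (lo := P.2) (t := t) ⟨j, hj⟩).not.1 (lt_irrefl j)
      exact ⟨y ⟨j, hj⟩, (hyR ⟨j, hj⟩).2.2.1, by simp at this; omega⟩
    · refine ⟨Q.2, by rwa [hj, ← hQP], ?_⟩
      simp only [steps] at ht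
      omega
  obtain ⟨r, hr, hrt⟩ := hbelow
  obtain ⟨s, hs, hts⟩ := habove
  exact hR.mem_of_le_of_le hr hs hrt hts

end Decode

section Encode

variable {R : Set (ℤ × ℤ)} {m : ℕ} {P Q : ℤ × ℤ} {p : ℕ → ℤ × ℤ} {x : ℤ}

noncomputable def reachTime (p : ℕ → ℤ × ℤ) (x : ℤ) : ℕ :=
  sInf {t | x ≤ (p t).1}

noncomputable def heightsOfPath (m : ℕ) (x₀ : ℤ) (p : ℕ → ℤ × ℤ) (i : Fin m) : ℤ :=
  (p (reachTime p (x₀ + (i : ℕ) + 1))).2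

lemma reachTime_le_iff (hp : IsNEPath P Q p) (hx : x ≤ Q.1) {t : ℕ} :
    reachTime p x ≤ t ↔ x ≤ (p t).1 := by
  have hne : {t | x ≤ (p t).1}.Nonempty := ⟨steps P Q, by simpa [hp.2.2 _ le_rfl] using hx⟩
  exact ⟨fun h => (Nat.sInf_mem hne).trans (monotone_fst.comp hp.monotone h),
    fun h => Nat.sInf_le h⟩

lemma reachTime_spec (hp : IsNEPath P Q p) (hPx : P.1 < x) (hx : x ≤ Q.1) :
    0 < reachTime p x ∧ reachTime p x ≤ steps P Q ∧
      p (reachTime p x - 1) = (x - 1, (p (reachTime p x)).2) ∧ (p (reachTime p x)).1 = x := by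
  have hreach := (reachTime_le_iff hp hx).1 le_rfl
  have hpos : 0 < reachTime p x := by
    by_contra! h
    have := (reachTime_le_iff hp hx (t := 0)).1 h
    rw [hp.1] at this
    omega
  have hbefore := (reachTime_le_iff hp hx).not.1 (Nat.sub_one_lt hpos.ne').not_ge
  have hend : reachTime p x ≤ steps P Q := (reachTime_le_iff hp hx).2 (by simpa [hp.2.2 _ le_rfl])
  refine ⟨hpos, hend, ?_⟩
  have hstep := hp.2.1 (reachTime p x - 1) (by omega)
  rw [Nat.sub_add_cancel hpos] at hstep
  rcases hstep with h | h <;> rw [h] at hreach ⊢ <;> simp [Prod.ext_iff] at hreach ⊢ <;> omega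

lemma monotone_heightsOfPath (hp : IsNEPath P Q p) (hQP : Q.1 = P.1 + m) :
    Monotone (heightsOfPath m P.1 p) := by
  intro i j hij
  refine monotone_snd.comp hp.monotone ((reachTime_le_iff hp (by omega)).2 ?_)
  have : ((i : ℕ) : ℤ) ≤ (j : ℕ) := by exact_mod_cast hij
  linarith [(reachTime_spec hp (x := P.1 + (j : ℕ) + 1) (by omega) (by omega)).2.2.2]

lemma heightsOfPath_mem (hp : IsNEPath P Q p) (hpR : ∀ t, p t ∈ R) (hQP : Q.1 = P.1 + m) :
    heightsOfPath m P.1 p ∈ crossingHeights R m P.1 P.2 Q.2 := by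
  refine ⟨monotone_heightsOfPath hp hQP, fun i => ?_⟩
  obtain ⟨-, -, hprev, hcur⟩ := reachTime_spec hp (x := P.1 + (i : ℕ) + 1) (by omega) (by omega)
  refine ⟨(hp.mem_Icc _).1.2, (hp.mem_Icc _).2.2, ?_, ?_⟩
  · simpa [hprev, heightsOfPath] using hpR (reachTime p (P.1 + (i : ℕ) + 1) - 1)
  · have : p (reachTime p (P.1 + (i : ℕ) + 1)) = (P.1 + (i : ℕ) + 1, heightsOfPath m P.1 p i) :=
      Prod.ext hcur rfl
    exact this ▸ hpR _

end Encode

section Bijection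

variable {R : Set (ℤ × ℤ)} {m : ℕ} {P Q : ℤ × ℤ}

lemma heightsOfPath_pathOfHeights {y : Fin m → ℤ} (hQP : Q.1 = P.1 + m) (hPQ : P.2 ≤ Q.2)
    (hy : Monotone y) (hyP : ∀ i, P.2 ≤ y i) (hyQ : ∀ i, y i ≤ Q.2) :
    heightsOfPath m P.1 (pathOfHeights P Q y) = y := by
  funext i
  have hform := @pathOfHeights_of_le m P Q y hQP hPQ hy hyQ
  obtain ⟨hpos, hend, hprev, hcur⟩ :=
    reachTime_spec (isNEPath_pathOfHeights hQP hPQ hy hyP hyQ) (x := P.1 + (i : ℕ) + 1)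
      (by omega) (by omega)
  set T := reachTime (pathOfHeights P Q y) (P.1 + (i : ℕ) + 1)
  rw [hform hend] at hcur
  rw [hform (by omega)] at hprev
  have hT : (eastCount P.2 y T : ℤ) = i + 1 := by simp at hcur; omega
  have hT' : (eastCount P.2 y (T - 1) : ℤ) = i := by simp [Prod.ext_iff] at hprev; omega
  -- the `i`-th East step is taken exactly between times `T - 1` and `T`
  have hlt := (lt_eastCount_iff hy (lo := P.2) (t := T) i).1 (by omega)
  have hge := (lt_eastCount_iff hy (lo := P.2) (t := T - 1) i).not.1 (by omega)
  show (pathOfHeights P Q y T).2 = y i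
  rw [hform hend]
  push_cast [Nat.cast_sub hpos] at hge ⊢
  omega

lemma pathOfHeights_heightsOfPath {p : ℕ → ℤ × ℤ} (hp : IsNEPath P Q p) (hQP : Q.1 = P.1 + m) :
    pathOfHeights P Q (heightsOfPath m P.1 p) = p := by
  funext t
  rcases lt_or_ge t (steps P Q) with ht | ht
  swap
  · simp [pathOfHeights, ht, hp.2.2 t ht]
  have hbd : ∀ i : Fin m, heightsOfPath m P.1 p i ≤ Q.2 := fun i =>
    (hp.mem_Icc (reachTime p (P.1 + (i : ℕ) + 1))).2.2
  rw [pathOfHeights_of_le hQP hp.le.2 (monotone_heightsOfPath hp hQP) hbd ht.le]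
  have hx : P.1 ≤ (p t).1 ∧ (p t).1 ≤ Q.1 := ⟨(hp.mem_Icc t).1.1, (hp.mem_Icc t).2.1⟩
  have hcount : eastCount P.2 (heightsOfPath m P.1 p) t = ((p t).1 - P.1).toNat := by
    refine eastCount_eq_of_forall_iff (monotone_heightsOfPath hp hQP) (by omega) fun i => ?_
    obtain ⟨hpos, hend, -, hcur⟩ := reachTime_spec hp (x := P.1 + (i : ℕ) + 1) (by omega) (by omega)
    have hsum := hp.fst_add_snd hend
    -- the `i`-th East step is taken at time `i + y i - P.2 = reachTime p (P.1 + i + 1) - 1`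
    have hrt := reachTime_le_iff hp (x := P.1 + (i : ℕ) + 1) (t := t) (by omega)
    simp only [heightsOfPath]
    omega
  rw [hcount]
  have := hp.fst_add_snd ht.le
  ext <;> simp <;> omega

noncomputable def pathsEquivCrossingHeights (hR : IsColumnConvex R) (hP : P ∈ R) (hQ : Q ∈ R)
    (hQP : Q.1 = P.1 + m) (hPQ : P.2 ≤ Q.2) :
    {p // IsNEPath P Q p ∧ ∀ t, p t ∈ R} ≃ crossingHeights R m P.1 P.2 Q.2 where
  toFun p := ⟨heightsOfPath m P.1 p, heightsOfPath_mem p.2.1 p.2.2 hQP⟩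
  invFun y := ⟨pathOfHeights P Q y,
    isNEPath_pathOfHeights hQP hPQ y.2.1 (fun i => (y.2.2 i).1) (fun i => (y.2.2 i).2.1),
    pathOfHeights_mem hR hP hQ hQP hPQ y.2⟩
  left_inv := by
    rintro ⟨p, hp, -⟩
    exact Subtype.ext (pathOfHeights_heightsOfPath hp hQP)
  right_inv := by
    rintro ⟨y, hmono, hy⟩
    exact Subtype.ext <|
      heightsOfPath_pathOfHeights hQP hPQ hmono (fun i => (hy i).1) (fun i => (hy i).2.1)

lemma pathCount_eq_ncard_crossingHeights (hR : IsColumnConvex R) (hP : P ∈ R) (hQ : Q ∈ R)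
    (hQP : Q.1 = P.1 + m) (hPQ : P.2 ≤ Q.2) :
    pathCount R P Q = (crossingHeights R m P.1 P.2 Q.2).ncard := by
  rw [pathCount, Nat.card_congr (pathsEquivCrossingHeights hR hP hQ hQP hPQ),
    Nat.card_coe_set_eq]

end Bijection

lemma Set.ncard_mul_ncard_le_of_inf_mem_of_sup_mem {α : Type*} [DistribLattice α]
    {s t s' t' : Set α} (hs : s.Finite) (ht : t.Finite) (hs' : s'.Finite) (ht' : t'.Finite)
    (hinf : ∀ a ∈ s, ∀ b ∈ t, a ⊓ b ∈ s') (hsup : ∀ a ∈ s, ∀ b ∈ t, a ⊔ b ∈ t') :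
    s.ncard * t.ncard ≤ s'.ncard * t'.ncard := by
  classical
  rw [Set.ncard_eq_toFinset_card _ hs, Set.ncard_eq_toFinset_card _ ht,
    Set.ncard_eq_toFinset_card _ hs', Set.ncard_eq_toFinset_card _ ht']
  refine (Finset.le_card_infs_mul_card_sups _ _).trans (Nat.mul_le_mul ?_ ?_) <;>
    refine Finset.card_le_card fun c hc => ?_
  · obtain ⟨a, ha, b, hb, rfl⟩ := Finset.mem_infs.1 hc
    simpa using hinf a (by simpa using ha) b (by simpa using hb)
  · obtain ⟨a, ha, b, hb, rfl⟩ := Finset.mem_sups.1 hc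
    simpa using hsup a (by simpa using ha) b (by simpa using hb)

section CrossingHeights

variable {R : Set (ℤ × ℤ)} {m : ℕ} {x₀ α β γ δ k : ℤ} {y z : Fin m → ℤ}

lemma crossingHeights_finite : (crossingHeights R m x₀ α γ).Finite :=
  (Set.finite_Icc (fun _ => α) fun _ => γ).subset fun _ hy =>
    ⟨fun i => (hy.2 i).1, fun i => (hy.2 i).2.1⟩

lemma inf_add_const_mem_crossingHeights (hR : IsColumnConvex R) (hk : 0 ≤ k)
    (hy : y ∈ crossingHeights R m x₀ α γ) (hz : z ∈ crossingHeights R m x₀ β δ) :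
    y ⊓ (z + fun _ => k) ∈ crossingHeights R m x₀ (min α (β + k)) (min γ (δ + k)) := by
  refine ⟨hy.1.inf (hz.1.add_const k), fun i => ?_⟩
  obtain ⟨hy₁, hy₂, hy₃, hy₄⟩ := hy.2 i
  obtain ⟨hz₁, hz₂, hz₃, hz₄⟩ := hz.2 i
  simp only [Pi.inf_apply, Pi.add_apply]
  refine ⟨by omega, by omega, ?_, ?_⟩ <;> rcases le_total (y i) (z i + k) with h | h <;>
    simp only [inf_of_le_left, inf_of_le_right, h, hy₃, hy₄]
  · exact hR.mem_of_le_of_le hz₃ hy₃ (by omega) h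
  · exact hR.mem_of_le_of_le hz₄ hy₄ (by omega) h

lemma sub_const_sup_mem_crossingHeights (hR : IsColumnConvex R) (hk : 0 ≤ k)
    (hy : y ∈ crossingHeights R m x₀ α γ) (hz : z ∈ crossingHeights R m x₀ β δ) :
    (y - fun _ => k) ⊔ z ∈ crossingHeights R m x₀ (max (α - k) β) (max (γ - k) δ) := by
  refine ⟨(hy.1.add_const (-k)).sup hz.1, fun i => ?_⟩
  obtain ⟨hy₁, hy₂, hy₃, hy₄⟩ := hy.2 i
  obtain ⟨hz₁, hz₂, hz₃, hz₄⟩ := hz.2 i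
  simp only [Pi.sup_apply, Pi.sub_apply]
  refine ⟨by omega, by omega, ?_, ?_⟩ <;> rcases le_total (y i - k) (z i) with h | h <;>
    simp only [sup_of_le_left, sup_of_le_right, h, hz₃, hz₄]
  · exact hR.mem_of_le_of_le hz₃ hy₃ h (by omega)
  · exact hR.mem_of_le_of_le hz₄ hy₄ h (by omega)

lemma ncard_crossingHeights_mul_le (hR : IsColumnConvex R) (hβα : β < α)
    (hgap : γ - δ < α - β) :
    (crossingHeights R m x₀ α γ).ncard * (crossingHeights R m x₀ β δ).ncard ≤
      (crossingHeights R m x₀ (α - 1) γ).ncard * (crossingHeights R m x₀ (β + 1) δ).ncard := by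
  set k := α - β - 1
  have hk : 0 ≤ k := by omega
  have shift (lo hi : ℤ) :
      ((· + fun _ => k) '' crossingHeights R m x₀ lo hi).ncard =
        (crossingHeights R m x₀ lo hi).ncard :=
    Set.ncard_image_of_injective _ (add_left_injective _)
  rw [← shift β δ, ← shift (β + 1) δ]
  refine Set.ncard_mul_ncard_le_of_inf_mem_of_sup_mem crossingHeights_finite
    (crossingHeights_finite.image _) crossingHeights_finite (crossingHeights_finite.image _) ?_ ?_
  · rintro y hy _ ⟨z, hz, rfl⟩
    convert inf_add_const_mem_crossingHeights hR hk hy hz using 2 <;> omega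
  · rintro y hy _ ⟨z, hz, rfl⟩
    refine ⟨(y - fun _ => k) ⊔ z, ?_, ?_⟩
    · convert sub_const_sup_mem_crossingHeights hR hk hy hz using 2 <;> omega
    · ext i
      simp only [Pi.add_apply, Pi.sup_apply, Pi.sub_apply]
      omega

end CrossingHeights

theorem lattice_path_vertical_general {a b : ℤ} (lower upper : ℕ → ℤ × ℤ)
    (R : Set (ℤ × ℤ)) (hR : R = staircaseRegion (steps (0, 0) (a, b)) lower upper)
    (A B C D : ℤ × ℤ) (hA : A ∈ R) (hB : B ∈ R) (hC : C ∈ R) (hD : D ∈ R)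
    (hABcol : A.1 = B.1)
    (hCDcol : C.1 = D.1) (hright : A.1 < C.1) (hCDle : D.2 ≤ C.2)
    (hgap : C.2 - D.2 < A.2 - B.2) :
    pathCount R A C * pathCount R B D ≤
      pathCount R (A - (0, 1)) C * pathCount R (B + (0, 1)) D := by
  have hconv : IsColumnConvex R := hR ▸ isColumnConvex_staircaseRegion _ lower upper
  rcases lt_or_ge C.2 A.2 with hCA | hAC
  · simp [pathCount_eq_zero_of_not_le fun h : A ≤ C => hCA.not_ge h.2]
  rcases lt_or_ge D.2 B.2 with hDB | hBD
  · simp [pathCount_eq_zero_of_not_le fun h : B ≤ D => hDB.not_ge h.2]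
  obtain ⟨m, hm⟩ : ∃ m : ℕ, C.1 = A.1 + m := ⟨(C.1 - A.1).toNat, by omega⟩
  have hA₁ : A - (0, 1) = (A.1, A.2 - 1) := by ext <;> simp
  have hB₁ : B + (0, 1) = (A.1, B.2 + 1) := by ext <;> simp [hABcol]
  have hB' : (A.1, B.2) ∈ R := hABcol ▸ hB
  have hA₁R : (A.1, A.2 - 1) ∈ R := hconv.mem_of_le_of_le hB' hA (by omega) (by omega)
  have hB₁R : (A.1, B.2 + 1) ∈ R := hconv.mem_of_le_of_le hB' hA (by omega) (by omega)
  rw [hA₁, hB₁, pathCount_eq_ncard_crossingHeights hconv hA hC hm hAC,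
    pathCount_eq_ncard_crossingHeights (m := m) hconv hB hD (by omega) hBD,
    pathCount_eq_ncard_crossingHeights hconv hA₁R hC hm (by omega),
    pathCount_eq_ncard_crossingHeights (m := m) hconv hB₁R hD (by omega) (by omega)]
  simpa [← hABcol] using ncard_crossingHeights_mul_le hconv (by omega) hgap

/-- Lemma 6.2(a): vertical variant of the path-switching inequality in a
staircase region. -/
theorem lattice_path_vertical {a b : ℤ} (lower upper : ℕ → ℤ × ℤ)
    (hlow : IsNEPath (0, 0) (a, b) lower) (hup : IsNEPath (0, 0) (a, b) upper)
    (R : Set (ℤ × ℤ)) (hR : R = staircaseRegion (steps (0, 0) (a, b)) lower upper)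
    (hlR : ∀ t, lower t ∈ R) (huR : ∀ t, upper t ∈ R)
    (A B C D : ℤ × ℤ) (hA : A ∈ R) (hB : B ∈ R) (hC : C ∈ R) (hD : D ∈ R)
    (hABcol : A.1 = B.1) (hABle : B.2 ≤ A.2)
    (hCDcol : C.1 = D.1) (hright : A.1 < C.1) (hCDle : D.2 ≤ C.2)
    (hgap : C.2 - D.2 < A.2 - B.2) :
    pathCount R A C * pathCount R B D ≤
      pathCount R (A - (0, 1)) C * pathCount R (B + (0, 1)) D :=
  lattice_path_vertical_general lower upper R hR A B C D hA hB hC hD hABcol hCDcol hright hCDle hgap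
end

section
/- Let P be a finite poset of width two and let A, B be forward events on the set of linear extensions of P, where a forward atomic event is a set of the form {L : L(α_i) < L(β_j)} for α_i in the first chain C₁ and β_j in the second chain C₂, and a forward event is an intersection of forward atomic events. Then under the uniform probability measure on linear extensions, P[A ∩ B] ≥ P[A] · P[B]. (Graham–Yao–Yao inequality.) -/
/-!
A linear extension `L` is determined by the positions `t j = L (β j)` of the second chain, and
counting the elements below `β j` shows `L (α i) < L (β j) ↔ i + j < t j`. Hence the position
vectors of linear extensions form a sublattice of the distributive lattice `Fin b → Fin n`
(pointwise max and min), in which forward events become up-sets. Daykin's inequality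
`|S| |T| ≤ |S ⊼ T| |S ⊻ T|` (the four functions theorem) then yields the correlation.
-/

open scoped Classical FinsetFamily
open Finset

theorem Finset.card_filter_mul_card_filter_le_card_filter_and_mul {α : Type*}
    [DistribLattice α] [DecidableEq α] {S : Finset α}
    (hsup : SupClosed (S : Set α)) (hinf : InfClosed (S : Set α))
    {p q : α → Prop} [DecidablePred p] [DecidablePred q] (hp : Monotone p) (hq : Monotone q) :
    #(S.filter p) * #(S.filter q) ≤ #(S.filter fun x => p x ∧ q x) * #S := by
  have hinfs : S.filter p ⊼ S.filter q ⊆ S := infs_subset_iff.2 fun x hx y hy =>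
    hinf (mem_filter.1 hx).1 (mem_filter.1 hy).1
  have hsups : S.filter p ⊻ S.filter q ⊆ S.filter fun x => p x ∧ q x :=
    sups_subset_iff.2 fun x hx y hy => by
      rw [mem_filter] at hx hy ⊢
      exact ⟨hsup hx.1 hy.1, hp le_sup_left hx.2, hq le_sup_right hy.2⟩
  calc #(S.filter p) * #(S.filter q)
      ≤ #(S.filter p ⊼ S.filter q) * #(S.filter p ⊻ S.filter q) :=
        le_card_infs_mul_card_sups _ _
    _ ≤ #S * #(S.filter fun x => p x ∧ q x) := by gcongr
    _ = _ := mul_comm _ _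

theorem Finset.card_filter_eq_card_filter_image {α β : Type*} [DecidableEq β] {s : Finset α}
    {f : α → β} (hf : Set.InjOn f s) {p : α → Prop} {q : β → Prop} [DecidablePred p]
    [DecidablePred q] (h : ∀ x ∈ s, p x ↔ q (f x)) :
    #(s.filter p) = #((s.image f).filter q) := by
  rw [filter_image, card_image_of_injOn (hf.mono (filter_subset _ _)), filter_congr h]

theorem StrictMono.lt_iff_lt_card_filter {β : Type*} [LinearOrder β] {a : ℕ} {s : Fin a → β}
    (hs : StrictMono s) (i : Fin a) (x : β) : s i < x ↔ (i : ℕ) < #{i' | s i' < x} := by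
  constructor
  · intro hi
    have : Iic i ⊆ ({i' | s i' < x} : Finset _) := fun i' hi' =>
      mem_filter.2 ⟨mem_univ _, (hs.monotone (mem_Iic.1 hi')).trans_lt hi⟩
    simpa using card_le_card this
  · intro hi
    by_contra! hx
    have : ({i' | s i' < x} : Finset _) ⊆ Iio i := fun i' hi' =>
      mem_Iio.2 (hs.lt_iff_lt.1 (lt_of_lt_of_le (mem_filter.1 hi').2 hx))
    simpa using (card_le_card this).trans_lt' hi

theorem Equiv.card_filter_inl_lt_add_card_filter_inr_lt {a b n : ℕ}
    (g : Fin a ⊕ Fin b ≃ Fin n) (y : Fin n) :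
    #{i | g (.inl i) < y} + #{j | g (.inr j) < y} = y := by
  have : #{p | g p < y} = #(Iio y) := card_equiv g (by simp)
  rw [Fin.card_Iio, card_filter, Fintype.sum_sum_type] at this
  simpa only [card_filter] using this

theorem Equiv.apply_inl_lt_apply_inr_iff {a b n : ℕ} (g : Fin a ⊕ Fin b ≃ Fin n)
    (hl : StrictMono (g ∘ Sum.inl)) (hr : StrictMono (g ∘ Sum.inr)) (i : Fin a) (j : Fin b) :
    g (.inl i) < g (.inr j) ↔ (i : ℕ) + j < g (.inr j) := by
  have hcount := g.card_filter_inl_lt_add_card_filter_inr_lt (g (.inr j))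
  have hj : #{j' | g (.inr j') < g (.inr j)} = j := by
    simp_rw [show ∀ j', g (.inr j') < g (.inr j) ↔ j' < j from fun _ => hr.lt_iff_lt,
      filter_gt_eq_Iio, Fin.card_Iio]
  have key := hl.lt_iff_lt_card_filter i (g (.inr j))
  simp only [Function.comp_apply] at key
  omega

theorem Equiv.eq_of_comp_inr_eq {a b n : ℕ} {g g' : Fin a ⊕ Fin b ≃ Fin n}
    (hg : StrictMono (g ∘ Sum.inl)) (hg' : StrictMono (g' ∘ Sum.inl))
    (h : g ∘ Sum.inr = g' ∘ Sum.inr) : g = g' := by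
  have hrange : ∀ f : Fin a ⊕ Fin b ≃ Fin n,
      Set.range (f ∘ Sum.inl) = (Set.range (f ∘ Sum.inr))ᶜ := by
    intro f
    rw [Set.range_comp, Set.range_comp, ← f.image_compl, Set.compl_range_inr]
  have hl : g ∘ Sum.inl = g' ∘ Sum.inl := (hg.range_inj hg').1 (by rw [hrange, hrange, h])
  refine Equiv.ext fun p => ?_
  rcases p with i | j
  · exact congrFun hl i
  · exact congrFun h j

theorem exists_equiv_strictMono_comp_inl_comp_inr_eq {a b n : ℕ} (hn : a + b = n)
    {t : Fin b → Fin n} (ht : StrictMono t) :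
    ∃ g : Fin a ⊕ Fin b ≃ Fin n, StrictMono (g ∘ Sum.inl) ∧ g ∘ Sum.inr = t := by
  have hcard : #(univ.image t)ᶜ = a := by
    rw [card_compl, card_image_of_injective _ ht.injective]
    simp only [card_univ, Fintype.card_fin]
    omega
  set s := (univ.image t)ᶜ.orderEmbOfFin hcard
  have hst : ∀ i j, s i ≠ t j := fun i j h =>
    mem_compl.1 (orderEmbOfFin_mem _ hcard i) (h ▸ mem_image_of_mem t (mem_univ j))
  have hbij : Function.Bijective (Sum.elim s t) :=
    (Fintype.bijective_iff_injective_and_card _).2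
      ⟨s.injective.sumElim ht.injective hst, by simp [hn]⟩
  exact ⟨.ofBijective _ hbij, s.strictMono, rfl⟩

section ChainPartition

variable {X : Type*} [PartialOrder X] {a b n : ℕ} (e : Fin a ⊕ Fin b ≃ X)

/- The chain partition is `e ∘ Sum.inl`, `e ∘ Sum.inr`; `t j` stands for the position of
`e (.inr j)` in a linear extension, so that `t j - j` elements of the first chain precede it. -/
def IsExtensionCode (t : Fin b → Fin n) : Prop :=
  StrictMono t ∧ ∀ i j, (e (.inl i) < e (.inr j) → (i : ℕ) + j < t j) ∧
    (e (.inr j) < e (.inl i) → (t j : ℕ) ≤ i + j)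

variable {e}

theorem supClosed_isExtensionCode : SupClosed {t : Fin b → Fin n | IsExtensionCode e t} := by
  rintro t ⟨ht, htc⟩ t' ⟨ht', htc'⟩
  refine ⟨fun j j' hj => max_lt_max (ht hj) (ht' hj), fun i j => ?_⟩
  rw [show (((t ⊔ t') j : Fin n) : ℕ) = max (t j : ℕ) (t' j) from Fin.coe_max _ _]
  exact ⟨fun h => lt_max_of_lt_left ((htc i j).1 h),
    fun h => max_le ((htc i j).2 h) ((htc' i j).2 h)⟩

theorem infClosed_isExtensionCode : InfClosed {t : Fin b → Fin n | IsExtensionCode e t} := by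
  rintro t ⟨ht, htc⟩ t' ⟨ht', htc'⟩
  refine ⟨fun j j' hj => min_lt_min (ht hj) (ht' hj), fun i j => ?_⟩
  rw [show (((t ⊓ t') j : Fin n) : ℕ) = min (t j : ℕ) (t' j) from Fin.coe_min _ _]
  exact ⟨fun h => lt_min ((htc i j).1 h) ((htc' i j).1 h),
    fun h => min_le_of_left_le ((htc i j).2 h)⟩

theorem StrictMono.apply_inl_lt_apply_inr_iff {L : X ≃ Fin n} (hL : StrictMono L)
    (hl : StrictMono (e ∘ Sum.inl)) (hr : StrictMono (e ∘ Sum.inr)) (i : Fin a) (j : Fin b) :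
    L (e (.inl i)) < L (e (.inr j)) ↔ (i : ℕ) + j < L (e (.inr j)) :=
  (e.trans L).apply_inl_lt_apply_inr_iff (hL.comp hl) (hL.comp hr) i j

theorem StrictMono.isExtensionCode_comp_inr {L : X ≃ Fin n} (hL : StrictMono L)
    (hl : StrictMono (e ∘ Sum.inl)) (hr : StrictMono (e ∘ Sum.inr)) :
    IsExtensionCode e (L ∘ e ∘ Sum.inr) := by
  refine ⟨hL.comp hr, fun i j => ⟨fun h => ?_, fun h => ?_⟩⟩
  · exact (hL.apply_inl_lt_apply_inr_iff hl hr i j).1 (hL h)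
  · exact not_lt.1 fun h' => (hL h).not_gt ((hL.apply_inl_lt_apply_inr_iff hl hr i j).2 h')

theorem StrictMono.eq_of_comp_inr_eq {L M : X ≃ Fin n} (hL : StrictMono L) (hM : StrictMono M)
    (hl : StrictMono (e ∘ Sum.inl)) (h : L ∘ e ∘ Sum.inr = M ∘ e ∘ Sum.inr) : L = M := by
  have := Equiv.eq_of_comp_inr_eq (g := e.trans L) (g' := e.trans M) (hL.comp hl) (hM.comp hl) h
  exact Equiv.ext fun x => by simpa using congrArg (· (e.symm x)) this

theorem IsExtensionCode.exists_strictMono_comp_inr_eq {t : Fin b → Fin n}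
    (ht : IsExtensionCode e t) (hl : StrictMono (e ∘ Sum.inl)) (hr : StrictMono (e ∘ Sum.inr))
    (hn : a + b = n) :
    ∃ L : X ≃ Fin n, StrictMono L ∧ L ∘ e ∘ Sum.inr = t := by
  obtain ⟨g, hgl, hgr⟩ := exists_equiv_strictMono_comp_inl_comp_inr_eq hn ht.1
  have hgt : ∀ j, g (.inr j) = t j := congrFun hgr
  have hcross := g.apply_inl_lt_apply_inr_iff hgl (hgr ▸ ht.1)
  refine ⟨e.symm.trans g, fun u v huv => ?_, by ext; simp [← hgr]⟩
  obtain ⟨p, rfl⟩ := e.surjective u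
  obtain ⟨q, rfl⟩ := e.surjective v
  simp only [Equiv.trans_apply, Equiv.symm_apply_apply]
  rcases p with i | j <;> rcases q with i' | j'
  · exact hgl (hl.lt_iff_lt.1 huv)
  · rw [hcross, hgt]; exact (ht.2 i j').1 huv
  · refine lt_of_le_of_ne (not_lt.1 fun h => ?_) (g.injective.ne Sum.inr_ne_inl)
    rw [hcross, hgt] at h
    exact (ht.2 i' j).2 huv |>.not_gt h
  · rw [hgt, hgt]; exact ht.1 (hr.lt_iff_lt.1 huv)

theorem image_comp_inr_setOf_strictMono (hl : StrictMono (e ∘ Sum.inl))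
    (hr : StrictMono (e ∘ Sum.inr)) (hn : a + b = n) :
    (fun L : X ≃ Fin n => L ∘ e ∘ Sum.inr) '' {L | StrictMono L} =
      {t | IsExtensionCode e t} := by
  ext t
  constructor
  · rintro ⟨L, hL, rfl⟩
    exact hL.isExtensionCode_comp_inr hl hr
  · intro ht
    exact ht.exists_strictMono_comp_inr_eq hl hr hn

def IsForwardCode (s : Finset (Fin a × Fin b)) (t : Fin b → Fin n) : Prop :=
  ∀ p ∈ s, (p.1 : ℕ) + p.2 < t p.2

theorem monotone_isForwardCode (s : Finset (Fin a × Fin b)) :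
    Monotone (IsForwardCode (n := n) s) :=
  fun _ _ htt' ht p hp => lt_of_lt_of_le (ht p hp) (htt' p.2)

theorem StrictMono.forall_lt_iff_isForwardCode {L : X ≃ Fin n} (hL : StrictMono L)
    (hl : StrictMono (e ∘ Sum.inl)) (hr : StrictMono (e ∘ Sum.inr))
    (s : Finset (Fin a × Fin b)) :
    (∀ p ∈ s, L (e (.inl p.1)) < L (e (.inr p.2))) ↔ IsForwardCode s (L ∘ e ∘ Sum.inr) :=
  forall₂_congr fun p _ => hL.apply_inl_lt_apply_inr_iff hl hr p.1 p.2

theorem card_filter_mul_card_filter_le_of_forward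
    (hl : StrictMono (e ∘ Sum.inl)) (hr : StrictMono (e ∘ Sum.inr)) (hn : a + b = n)
    {E : Finset (X ≃ Fin n)} (hE : ∀ L, L ∈ E ↔ StrictMono L)
    (sA sB : Finset (Fin a × Fin b)) :
    #(E.filter fun L => ∀ p ∈ sA, L (e (.inl p.1)) < L (e (.inr p.2))) *
        #(E.filter fun L => ∀ p ∈ sB, L (e (.inl p.1)) < L (e (.inr p.2))) ≤
      #(E.filter fun L => (∀ p ∈ sA, L (e (.inl p.1)) < L (e (.inr p.2))) ∧
        ∀ p ∈ sB, L (e (.inl p.1)) < L (e (.inr p.2))) * #E := by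
  set code := fun L : X ≃ Fin n => L ∘ e ∘ Sum.inr
  have hinj : Set.InjOn code E := fun L hL M hM h =>
    ((hE L).1 hL).eq_of_comp_inr_eq ((hE M).1 hM) hl h
  have himage : (E.image code : Set (Fin b → Fin n)) = {t | IsExtensionCode e t} := by
    rw [coe_image, ← image_comp_inr_setOf_strictMono hl hr hn]
    exact congrArg (code '' ·) (Set.ext hE)
  have hforward (s) (L) (hL : L ∈ E) := ((hE L).1 hL).forall_lt_iff_isForwardCode hl hr s
  rw [card_filter_eq_card_filter_image hinj (hforward sA),
    card_filter_eq_card_filter_image hinj (hforward sB), ← card_image_of_injOn hinj,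
    card_filter_eq_card_filter_image hinj (q := fun t => IsForwardCode sA t ∧ IsForwardCode sB t)
      fun L hL => and_congr (hforward sA L hL) (hforward sB L hL)]
  exact card_filter_mul_card_filter_le_card_filter_and_mul (himage ▸ supClosed_isExtensionCode)
    (himage ▸ infClosed_isExtensionCode) (monotone_isForwardCode sA) (monotone_isForwardCode sB)

end ChainPartition

/-- Graham–Yao–Yao inequality: for a width-two poset with chain partition
`(α, β)`, forward events (intersections of events `{L : L(α_i) < L(β_j)}`) are
positively correlated under the uniform measure on linear extensions, stated as
`#A · #B ≤ #(A ∩ B) · #𝓔(P)`. -/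
theorem graham_yao_yao {X : Type*} [Fintype X] [PartialOrder X] [DecidableEq X]
    {a b : ℕ}
    (α : Fin a → X) (β : Fin b → X) (hα : StrictMono α) (hβ : StrictMono β)
    (hdisj : ∀ i j, α i ≠ β j)
    (hcover : ∀ x : X, (∃ i, α i = x) ∨ (∃ j, β j = x))
    (E A B : Finset (X ≃ Fin (Fintype.card X)))
    (hE : E = Finset.univ.filter fun L => ∀ u v : X, u < v → L u < L v)
    (hA : ∃ s : Finset (Fin a × Fin b),
      A = E.filter fun L => ∀ p ∈ s, L (α p.1) < L (β p.2))
    (hB : ∃ s : Finset (Fin a × Fin b),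
      B = E.filter fun L => ∀ p ∈ s, L (α p.1) < L (β p.2)) :
    A.card * B.card ≤ (A ∩ B).card * E.card := by
  obtain ⟨sA, rfl⟩ := hA
  obtain ⟨sB, rfl⟩ := hB
  have hsurj : Function.Surjective (Sum.elim α β) := fun x => by
    rcases hcover x with ⟨i, rfl⟩ | ⟨j, rfl⟩
    exacts [⟨.inl i, rfl⟩, ⟨.inr j, rfl⟩]
  let e : Fin a ⊕ Fin b ≃ X :=
    .ofBijective _ ⟨hα.injective.sumElim hβ.injective hdisj, hsurj⟩
  have hn : a + b = Fintype.card X := by simpa using Fintype.card_congr e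
  rw [← filter_and]
  exact card_filter_mul_card_filter_le_of_forward (e := e) hα hβ hn
    (fun L => by rw [hE, mem_filter]; exact and_iff_right (mem_univ L)) sA sB
end

section
/- Positive correlation of atomic events extends to intersections: let 𝓔 be a finite set (of linear extensions) and suppose that for every poset P' obtained from P by adding relations (i.e., every induced restriction of the uniform measure to a downward-compatible sub-collection of linear extensions which is itself the set of linear extensions of a width-two poset), every pair of forward atomic events is positively correlated. Then every pair of forward events (finite intersections of forward atomic events) on P is positively correlated: P[A₁ ∩ ... ∩ A_k ∩ B₁ ∩ ... ∩ B_ℓ] ≥ P[A₁ ∩ ... ∩ A_k] · P[B₁ ∩ ... ∩ B_ℓ]. -/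
/-! Write `N S` for the number of linear extensions satisfying every atomic constraint in `S`.
The hypothesis says that any two atoms `p`, `q` are positively correlated after conditioning on
any `S`: `N (S + p) N (S + q) ≤ N (S + p + q) N S`. Correlation over a base `B` composes along
chains `B ⊆ A ⊆ A'` (multiply the two inequalities and cancel `N A`; if `N A = 0`, then
`N A' = 0` by monotonicity), so adding the atoms of
`S` one at a time and then those of `T` one at a time gives `N S * N T ≤ N (S ∪ T) * N ∅`. -/

open scoped Classical

theorem Antitone.eq_zero_of_le {α R : Type*} [Preorder α] [PartialOrder R] [Zero R] {f : α → R}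
    (hf : Antitone f) (hf₀ : 0 ≤ f) {x y : α} (hxy : x ≤ y) (hx : f x = 0) : f y = 0 :=
  le_antisymm (hx ▸ hf hxy) (hf₀ y)

section Correlation

variable {ι R : Type*} [DecidableEq ι] [CommSemiring R] [LinearOrder R] [IsStrictOrderedRing R]

theorem mul_le_mul_of_mul_le_mul_trans {a a' b c d e : R} (ha : 0 ≤ a) (ha' : 0 ≤ a')
    (hb : 0 ≤ b) (he : 0 ≤ e) (ha'_zero : a = 0 → a' = 0)
    (h₁ : a * c ≤ d * b) (h₂ : a' * d ≤ e * a) : a' * c ≤ e * b := by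
  rcases ha.eq_or_lt with rfl | ha_pos
  · rw [ha'_zero rfl, zero_mul]
    exact mul_nonneg he hb
  · refine le_of_mul_le_mul_left ?_ ha_pos
    calc a * (a' * c) = a' * (a * c) := mul_left_comm _ _ _
      _ ≤ a' * (d * b) := mul_le_mul_of_nonneg_left h₁ ha'
      _ = a' * d * b := (mul_assoc _ _ _).symm
      _ ≤ e * a * b := mul_le_mul_of_nonneg_right h₂ hb
      _ = a * (e * b) := by ring

def AtomsCorrelated (N : Finset ι → R) : Prop :=
  ∀ S p q, N (insert p S) * N (insert q S) ≤ N (insert q (insert p S)) * N S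

namespace AtomsCorrelated

variable {N : Finset ι → R} (hN : AtomsCorrelated N) (hN₀ : 0 ≤ N) (hanti : Antitone N)

include hN hN₀ hanti

theorem mul_le_mul_union_insert (B S : Finset ι) (q : ι) :
    N (S ∪ B) * N (insert q B) ≤ N (insert q (S ∪ B)) * N B := by
  induction S using Finset.induction_on with
  | empty => rw [Finset.empty_union, mul_comm]
  | insert p S _ ih =>
    rw [Finset.insert_union]
    exact mul_le_mul_of_mul_le_mul_trans (hN₀ _) (hN₀ _) (hN₀ _) (hN₀ _)
      (hanti.eq_zero_of_le hN₀ (Finset.subset_insert p _)) ih (hN _ p q)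

theorem mul_le_mul_union (B S T : Finset ι) :
    N (S ∪ B) * N (T ∪ B) ≤ N (S ∪ T ∪ B) * N B := by
  induction T using Finset.induction_on with
  | empty => rw [Finset.empty_union, Finset.union_empty, mul_comm]
  | insert q T _ ih =>
    have h_insert :
        N (insert q (T ∪ B)) * N (S ∪ T ∪ B) ≤ N (insert q (S ∪ T ∪ B)) * N (T ∪ B) := by
      rw [mul_comm, Finset.union_assoc]
      exact hN.mul_le_mul_union_insert hN₀ hanti (T ∪ B) S q
    rw [Finset.insert_union, Finset.union_insert, Finset.insert_union, mul_comm (N (S ∪ B))]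
    exact mul_le_mul_of_mul_le_mul_trans (hN₀ _) (hN₀ _) (hN₀ _) (hN₀ _)
      (hanti.eq_zero_of_le hN₀ (Finset.subset_insert q _)) (by rwa [mul_comm (N (T ∪ B))]) h_insert

end AtomsCorrelated

end Correlation

theorem forward_events_positively_correlated_general
    {X : Type*} [Fintype X] {a b : ℕ}
    (α : Fin a → X) (β : Fin b → X)
    (E : Finset (X ≃ Fin (Fintype.card X)))
    (Hatomic : ∀ (S : Finset (Fin a × Fin b)) (p q : Fin a × Fin b),
      ((E.filter fun L => ∀ r ∈ S, L (α r.1) < L (β r.2)).filter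
          fun L => L (α p.1) < L (β p.2)).card *
        ((E.filter fun L => ∀ r ∈ S, L (α r.1) < L (β r.2)).filter
          fun L => L (α q.1) < L (β q.2)).card ≤
      ((E.filter fun L => ∀ r ∈ S, L (α r.1) < L (β r.2)).filter
          fun L => L (α p.1) < L (β p.2) ∧ L (α q.1) < L (β q.2)).card *
        (E.filter fun L => ∀ r ∈ S, L (α r.1) < L (β r.2)).card)
    (S₁ S₂ : Finset (Fin a × Fin b)) :
    (E.filter fun L => ∀ r ∈ S₁, L (α r.1) < L (β r.2)).card *
      (E.filter fun L => ∀ r ∈ S₂, L (α r.1) < L (β r.2)).card ≤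
    (E.filter fun L => (∀ r ∈ S₁, L (α r.1) < L (β r.2)) ∧
        (∀ r ∈ S₂, L (α r.1) < L (β r.2))).card * E.card := by
  set N : Finset (Fin a × Fin b) → ℕ :=
    fun S => (E.filter fun L => ∀ r ∈ S, L (α r.1) < L (β r.2)).card
  have hanti : Antitone N := fun S T hST =>
    Finset.card_le_card (Finset.monotone_filter_right E fun L _ h r hr => h r (hST hr))
  have hN : AtomsCorrelated N := fun S p q => by
    simpa only [N, Finset.filter_filter, Finset.forall_mem_insert, and_comm, and_left_comm,
      and_assoc] using Hatomic S p q
  have h := hN.mul_le_mul_union (fun _ => Nat.zero_le _) hanti ∅ S₁ S₂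
  simpa only [N, Finset.union_empty, Finset.forall_mem_union, Finset.forall_mem_empty_iff,
    Finset.filter_true] using h

/-- Positive correlation of forward atomic events extends to forward events
(finite intersections of atomic events). Adding a set `S` of forward relations
to the width-two poset `P` yields the poset `P'` whose linear extensions are
exactly the elements of `E` satisfying the constraints in `S`; the hypothesis
states that on every such `P'` each pair of forward atomic events is positively
correlated, and the conclusion is positive correlation for arbitrary forward
events on `P`. -/
theorem forward_events_positively_correlated
    {X : Type*} [Fintype X] [PartialOrder X] [DecidableEq X] {a b : ℕ}
    (α : Fin a → X) (β : Fin b → X) (hα : StrictMono α) (hβ : StrictMono β)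
    (hdisj : ∀ i j, α i ≠ β j)
    (hcover : ∀ x : X, (∃ i, α i = x) ∨ (∃ j, β j = x))
    (E : Finset (X ≃ Fin (Fintype.card X)))
    (hE : E = Finset.univ.filter fun L => ∀ u v : X, u < v → L u < L v)
    (Hatomic : ∀ (S : Finset (Fin a × Fin b)) (p q : Fin a × Fin b),
      ((E.filter fun L => ∀ r ∈ S, L (α r.1) < L (β r.2)).filter
          fun L => L (α p.1) < L (β p.2)).card *
        ((E.filter fun L => ∀ r ∈ S, L (α r.1) < L (β r.2)).filter
          fun L => L (α q.1) < L (β q.2)).card ≤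
      ((E.filter fun L => ∀ r ∈ S, L (α r.1) < L (β r.2)).filter
          fun L => L (α p.1) < L (β p.2) ∧ L (α q.1) < L (β q.2)).card *
        (E.filter fun L => ∀ r ∈ S, L (α r.1) < L (β r.2)).card)
    (S₁ S₂ : Finset (Fin a × Fin b)) :
    (E.filter fun L => ∀ r ∈ S₁, L (α r.1) < L (β r.2)).card *
      (E.filter fun L => ∀ r ∈ S₂, L (α r.1) < L (β r.2)).card ≤
    (E.filter fun L => (∀ r ∈ S₁, L (α r.1) < L (β r.2)) ∧
        (∀ r ∈ S₂, L (α r.1) < L (β r.2))).card * E.card :=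
  forward_events_positively_correlated_general α β E Hatomic S₁ S₂
end
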